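/- arXiv:1701.05509 — 8 statements merged into one kernel-verified Lean document; each statement's English description precedes it below -/
import Mathlib

section
/- Let Y be a metrizable locally compact topological space, E a real or complex Banach space, and G a metrizable locally compact group acting continuously and properly on Y on the right. If (y_j) is a sequence in Y with lim_{j→∞} y_j = y in Y, then for every continuous function d : Y → E vanishing at infinity one has lim_{j→∞} sup_{t∈G} ‖d(y_j·t) − d(y·t)‖ = 0. -/
open Filter Topology

/-!
Fix a compact neighbourhood `K` of the limit point and, given `ε`, a compact `L` off which
`‖d‖ < ε / 2`. By properness the set `T` of `t` with `K · t` meeting `L` is compact. For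
`t ∉ T` both `d (y · t)` and `d (y∞ · t)` are small as soon as `y ∈ K`; on the compact set `T`
the continuous function `(y, t) ↦ d (y · t)` converges uniformly in `t` as `y → y∞`
(tube lemma).
-/

theorem IsCompact.tendstoUniformlyOn_of_continuous {α β γ : Type*} [TopologicalSpace α]
    [TopologicalSpace β] [UniformSpace γ] {f : α → β → γ} {k : Set β} (hk : IsCompact k)
    (hf : Continuous ↿f) (q : α) : TendstoUniformlyOn f (f q) (𝓝 q) k := by
  intro u hu
  obtain ⟨v, hv, hvu⟩ :=
    hk.mem_uniformity_of_prod hf.continuousOn (Set.mem_univ q) (symm_le_uniformity hu)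
  rw [nhdsWithin_univ] at hv
  exact Filter.mem_of_superset hv hvu

theorem tendsto_iSup_norm_sub_of_tendstoUniformly {α ι E : Type*} [SeminormedAddCommGroup E]
    {F : α → ι → E} {f : ι → E} {l : Filter α} (h : TendstoUniformly F f l) :
    Tendsto (fun a => ⨆ i, ‖F a i - f i‖) l (𝓝 0) := by
  refine Metric.tendsto_nhds.2 fun ε hε => ?_
  filter_upwards [Metric.tendstoUniformly_iff.1 h (ε / 2) (half_pos hε)] with a ha
  have hsup : ⨆ i, ‖F a i - f i‖ ≤ ε / 2 :=
    Real.iSup_le (fun i => by simpa [dist_eq_norm'] using (ha i).le) (half_pos hε).le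
  rw [Real.dist_0_eq_abs, abs_of_nonneg (Real.iSup_nonneg fun _ => norm_nonneg _)]
  linarith

theorem tendstoUniformly_comp_act_of_proper {Y G E : Type*} [TopologicalSpace Y]
    [WeaklyLocallyCompactSpace Y] [TopologicalSpace G] [SeminormedAddCommGroup E]
    {act : Y → G → Y} (hcont : Continuous fun p : Y × G => act p.1 p.2)
    (hproper : ∀ K L : Set Y, IsCompact K → IsCompact L →
      IsCompact {t : G | ∃ k ∈ K, act k t ∈ L})
    {d : Y → E} (hd : Continuous d) (hd0 : Tendsto d (cocompact Y) (𝓝 0)) (y₀ : Y) :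
    TendstoUniformly (fun y t => d (act y t)) (fun t => d (act y₀ t)) (𝓝 y₀) := by
  rw [Metric.tendstoUniformly_iff]
  intro ε hε
  obtain ⟨L, hL, hdL⟩ : ∃ L, IsCompact L ∧ Lᶜ ⊆ {x | ‖d x‖ < ε / 2} :=
    mem_cocompact.1 (hd0.norm.eventually (gt_mem_nhds (by simpa using half_pos hε)))
  obtain ⟨K, hK, hKy₀⟩ := exists_compact_mem_nhds y₀
  have hT := hproper K L hK hL
  have hnear := Metric.tendstoUniformlyOn_iff.1
    (hT.tendstoUniformlyOn_of_continuous (f := fun y t => d (act y t)) (hd.comp hcont) y₀) ε hε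
  filter_upwards [hKy₀, hnear] with y hyK hyT t
  by_cases ht : ∃ k ∈ K, act k t ∈ L
  · exact hyT t ht
  · have hy₀t : ‖d (act y₀ t)‖ < ε / 2 := hdL fun h => ht ⟨y₀, mem_of_mem_nhds hKy₀, h⟩
    have hyt : ‖d (act y t)‖ < ε / 2 := hdL fun h => ht ⟨y, hyK, h⟩
    calc dist (d (act y₀ t)) (d (act y t)) ≤ ‖d (act y₀ t)‖ + ‖d (act y t)‖ :=
          dist_le_norm_add_norm _ _
      _ < ε / 2 + ε / 2 := add_lt_add hy₀t hyt
      _ = ε := add_halves ε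

theorem stmt_0_general {Y E G : Type*} [TopologicalSpace Y] [LocallyCompactSpace Y]
    [NormedAddCommGroup E] [TopologicalSpace G]
    (act : Y → G → Y)
    (hcont : Continuous fun p : Y × G => act p.1 p.2)
    (hproper : ∀ K L : Set Y, IsCompact K → IsCompact L →
      IsCompact {t : G | ∃ k ∈ K, act k t ∈ L})
    (d : Y → E) (hd : Continuous d) (hd0 : Tendsto d (cocompact Y) (𝓝 0))
    (y : ℕ → Y) (ylim : Y) (hy : Tendsto y atTop (𝓝 ylim)) :
    Tendsto (fun j => ⨆ t : G, ‖d (act (y j) t) - d (act ylim t)‖) atTop (𝓝 0) :=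
  (tendsto_iSup_norm_sub_of_tendstoUniformly
    (tendstoUniformly_comp_act_of_proper hcont hproper hd hd0 ylim)).comp hy

/-- For a proper continuous right action of a metrizable locally compact
group `G` on a metrizable locally compact space `Y`, and `d : Y → E` continuous
vanishing at infinity (`E` a Banach space), if `y j → y∞` then
`sup_{t ∈ G} ‖d(y j · t) − d(y∞ · t)‖ → 0`. -/
theorem stmt_0 {Y E G : Type*} [TopologicalSpace Y] [TopologicalSpace.MetrizableSpace Y]
    [LocallyCompactSpace Y]
    [NormedAddCommGroup E] [NormedSpace ℝ E] [CompleteSpace E]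
    [Group G] [TopologicalSpace G] [IsTopologicalGroup G]
    [TopologicalSpace.MetrizableSpace G] [LocallyCompactSpace G]
    (act : Y → G → Y)
    (hcont : Continuous fun p : Y × G => act p.1 p.2)
    (hone : ∀ y, act y 1 = y)
    (hmul : ∀ (y : Y) (s t : G), act (act y s) t = act y (s * t))
    (hproper : ∀ K L : Set Y, IsCompact K → IsCompact L →
      IsCompact {t : G | ∃ k ∈ K, act k t ∈ L})
    (d : Y → E) (hd : Continuous d) (hd0 : Tendsto d (cocompact Y) (𝓝 0))
    (y : ℕ → Y) (ylim : Y) (hy : Tendsto y atTop (𝓝 ylim)) :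
    Tendsto (fun j => ⨆ t : G, ‖d (act (y j) t) - d (act ylim t)‖) atTop (𝓝 0) :=
  stmt_0_general act hcont hproper d hd hd0 y ylim hy
end

section
/- Let G be a metrizable locally compact group equipped with a left Haar measure, Y a metrizable locally compact space with a continuous proper right action of G, and H₀ a separable complex Hilbert space. Let d : Y → K(H₀) be a norm-continuous compact-operator-valued function vanishing at infinity, and let χ : G → ℂ be continuous with compact support. Suppose A : Y → B(L²(G,H₀)) is a family of bounded operators such that for every y ∈ Y, every φ ∈ L²(G,H₀) and almost every t ∈ G one has (A(y)φ)(t) = d(y·t⁻¹) ∫_G χ(s) φ(s⁻¹t) ds. Then the map y ↦ A(y) is continuous from Y to B(L²(G,H₀)) with respect to the operator norm topology. -/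
/-!
`A y - A y'` is the product–convolution operator `φ ↦ (d (y·t⁻¹) - d (y'·t⁻¹)) (χ ⋆ φ)(t)`, so by
Young's inequality `‖χ ⋆ φ‖₂ ≤ ‖χ‖₁ ‖φ‖₂` its norm is at most `‖χ‖₁ · supₜ ‖d (y·t) - d (y'·t)‖`.
This supremum tends to `0` as `y' → y`: fix a compact neighbourhood `K` of `y` and a compact `L`
outside which `d` is small; by properness the `t` with `K·t ∩ L ≠ ∅` form a compact set, on which
`(y', t) ↦ d (y'·t)` is uniformly continuous in `y'`, and off it both terms are small.

The Haar measure need not be σ-finite and `G` need not be second countable, so Young's inequality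
is proved by Tonelli only after restricting `t` to a σ-finite set carrying the `L²` function and
`s` to a second countable open neighbourhood of `tsupport χ`.
-/

open Filter Topology MeasureTheory Set
open scoped ENNReal

theorem ENNReal.sq_lintegral_mul_le {α : Type*} [MeasurableSpace α] {μ : Measure α}
    {a g : α → ℝ≥0∞} (ha : AEMeasurable a μ) (hg : AEMeasurable g μ) :
    (∫⁻ x, a x * g x ∂μ) ^ 2 ≤ (∫⁻ x, a x ∂μ) * ∫⁻ x, a x * g x ^ 2 ∂μ := by
  have hsqrt_mul : ∀ x : ℝ≥0∞, x ^ (2⁻¹ : ℝ) * x ^ (2⁻¹ : ℝ) = x := fun x => by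
    rw [← ENNReal.rpow_add_of_nonneg _ _ (by norm_num) (by norm_num)]; norm_num
  have hsqrt_sq : ∀ x : ℝ≥0∞, (x ^ (2⁻¹ : ℝ)) ^ 2 = x := fun x => by
    rw [← ENNReal.rpow_natCast, ← ENNReal.rpow_mul]; norm_num
  have hCS := ENNReal.lintegral_mul_le_Lp_mul_Lq μ .two_two (f := fun x => a x ^ (2⁻¹ : ℝ))
    (g := fun x => a x ^ (2⁻¹ : ℝ) * g x) (ha.pow_const _) ((ha.pow_const _).mul hg)
  simp only [Pi.mul_apply, ← mul_assoc, hsqrt_mul, ENNReal.rpow_two, mul_pow, hsqrt_sq,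
    one_div] at hCS
  calc (∫⁻ x, a x * g x ∂μ) ^ 2
      ≤ ((∫⁻ x, a x ∂μ) ^ (2⁻¹ : ℝ) * (∫⁻ x, a x * g x ^ 2 ∂μ) ^ (2⁻¹ : ℝ)) ^ 2 := by gcongr
    _ = (∫⁻ x, a x ∂μ) * ∫⁻ x, a x * g x ^ 2 ∂μ := by rw [mul_pow, hsqrt_sq, hsqrt_sq]

theorem sq_eLpNorm_two {α E : Type*} [MeasurableSpace α] {ν : Measure α} [NormedAddCommGroup E]
    (f : α → E) : eLpNorm f 2 ν ^ 2 = ∫⁻ x, ‖f x‖ₑ ^ 2 ∂ν := by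
  simpa [ENNReal.rpow_two] using
    eLpNorm_nnreal_pow_eq_lintegral (f := f) (μ := ν) (p := 2) two_ne_zero

theorem IsCompact.exists_isOpen_superset_secondCountableTopology {X : Type*} [TopologicalSpace X]
    [TopologicalSpace.MetrizableSpace X] [LocallyCompactSpace X] {K : Set X} (hK : IsCompact K) :
    ∃ U : Set X, IsOpen U ∧ K ⊆ U ∧ SecondCountableTopology U := by
  obtain ⟨L, hL, hKL⟩ := exists_compact_superset hK
  let := TopologicalSpace.metrizableSpaceMetric X
  exact ⟨interior L, isOpen_interior, hKL,
    (hL.isSeparable.mono interior_subset).secondCountableTopology⟩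

section Convolution

variable {G : Type*} [Group G] [TopologicalSpace G] [IsTopologicalGroup G]
  [MeasurableSpace G] [BorelSpace G]

theorem measurable_mul_comp_inv_mul_of_hasCompactSupport [TopologicalSpace.MetrizableSpace G]
    [LocallyCompactSpace G] {a b : G → ℝ≥0∞} (ha : Measurable a) (ha_supp : HasCompactSupport a)
    (hb : Measurable b) : Measurable fun p : G × G => a p.2 * b (p.2⁻¹ * p.1) := by
  obtain ⟨U, hU, haU, _⟩ := ha_supp.exists_isOpen_superset_secondCountableTopology
  let e : G × U → G × G := Prod.map id Subtype.val
  have he : MeasurableEmbedding e :=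
    MeasurableEmbedding.id.prodMap (MeasurableEmbedding.subtype_coe hU.measurableSet)
  -- the Borel σ-algebra of `G × U` is the product σ-algebra because `U` is second countable
  have hU_meas : Measurable fun p : G × U => a p.2 * b ((p.2 : G)⁻¹ * p.1) :=
    (ha.comp (measurable_subtype_coe.comp measurable_snd)).mul
      (hb.comp (by fun_prop : Continuous fun p : G × U => (p.2 : G)⁻¹ * p.1).measurable)
  convert he.measurable_extend hU_meas measurable_const (g' := 0) using 1
  funext ⟨t, s⟩
  by_cases hs : s ∈ U
  · exact (he.injective.extend_apply (fun p : G × U => a p.2 * b ((p.2 : G)⁻¹ * p.1)) 0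
      (t, ⟨s, hs⟩)).symm
  · rw [Function.extend_apply' _ _ _ ?_, image_eq_zero_of_notMem_tsupport (fun h => hs (haU h)),
      zero_mul, Pi.zero_apply]
    rintro ⟨⟨t', s'⟩, h⟩
    have hs' : (s' : G) = s := congrArg Prod.snd h
    exact hs (hs' ▸ s'.2)

variable {μ : Measure G} [μ.IsMulLeftInvariant]

theorem setLIntegral_lintegral_mul_comp_inv_mul_le [TopologicalSpace.MetrizableSpace G]
    [LocallyCompactSpace G] [IsFiniteMeasureOnCompacts μ] {a b : G → ℝ≥0∞} (ha : Measurable a)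
    (ha_supp : HasCompactSupport a) (hb : Measurable b) (T : Set G) [SigmaFinite (μ.restrict T)] :
    ∫⁻ t in T, ∫⁻ s, a s * b (s⁻¹ * t) ∂μ ∂μ ≤ (∫⁻ s, a s ∂μ) * ∫⁻ u, b u ∂μ := by
  have : IsFiniteMeasure (μ.restrict (tsupport a)) :=
    ⟨by simpa using ha_supp.isCompact.measure_lt_top⟩
  have hsupp (h : G → ℝ≥0∞) : ∫⁻ s in tsupport a, a s * h s ∂μ = ∫⁻ s, a s * h s ∂μ :=
    setLIntegral_eq_of_support_subset
      ((Function.support_mul_subset_left _ _).trans (subset_tsupport a))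
  calc ∫⁻ t in T, ∫⁻ s, a s * b (s⁻¹ * t) ∂μ ∂μ
      = ∫⁻ t in T, ∫⁻ s in tsupport a, a s * b (s⁻¹ * t) ∂μ ∂μ := by simp_rw [hsupp]
    _ = ∫⁻ s in tsupport a, ∫⁻ t in T, a s * b (s⁻¹ * t) ∂μ ∂μ :=
      lintegral_lintegral_swap
        (measurable_mul_comp_inv_mul_of_hasCompactSupport ha ha_supp hb).aemeasurable
    _ = ∫⁻ s in tsupport a, a s * ∫⁻ t in T, b (s⁻¹ * t) ∂μ ∂μ := by
      congr! 2 with s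
      exact lintegral_const_mul _ (hb.comp (measurable_const_mul _))
    _ ≤ ∫⁻ s in tsupport a, a s * ∫⁻ u, b u ∂μ ∂μ := by
      gcongr ∫⁻ s in tsupport a, a s * ?_ ∂μ with s
      exact (setLIntegral_le_lintegral T _).trans_eq (lintegral_mul_left_eq_self (μ := μ) b s⁻¹)
    _ = (∫⁻ s, a s ∂μ) * ∫⁻ u, b u ∂μ := by
      rw [lintegral_mul_const _ ha, setLIntegral_eq_of_support_subset (subset_tsupport a)]

theorem setLIntegral_sq_lintegral_mul_comp_inv_mul_le [TopologicalSpace.MetrizableSpace G]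
    [LocallyCompactSpace G] [IsFiniteMeasureOnCompacts μ] {a b : G → ℝ≥0∞} (ha : Measurable a)
    (ha_supp : HasCompactSupport a) (ha_fin : ∫⁻ s, a s ∂μ ≠ ∞) (hb : Measurable b) (T : Set G)
    [SigmaFinite (μ.restrict T)] :
    ∫⁻ t in T, (∫⁻ s, a s * b (s⁻¹ * t) ∂μ) ^ 2 ∂μ ≤ (∫⁻ s, a s ∂μ) ^ 2 * ∫⁻ u, b u ^ 2 ∂μ :=
  calc ∫⁻ t in T, (∫⁻ s, a s * b (s⁻¹ * t) ∂μ) ^ 2 ∂μ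
      ≤ ∫⁻ t in T, (∫⁻ s, a s ∂μ) * ∫⁻ s, a s * b (s⁻¹ * t) ^ 2 ∂μ ∂μ :=
        lintegral_mono fun t => ENNReal.sq_lintegral_mul_le ha.aemeasurable
          (hb.comp (measurable_inv.mul_const t)).aemeasurable
    _ = (∫⁻ s, a s ∂μ) * ∫⁻ t in T, ∫⁻ s, a s * b (s⁻¹ * t) ^ 2 ∂μ ∂μ :=
        lintegral_const_mul' _ _ ha_fin
    _ ≤ (∫⁻ s, a s ∂μ) * ((∫⁻ s, a s ∂μ) * ∫⁻ u, b u ^ 2 ∂μ) := by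
        gcongr
        exact setLIntegral_lintegral_mul_comp_inv_mul_le ha ha_supp (hb.pow_const 2) T
    _ = (∫⁻ s, a s ∂μ) ^ 2 * ∫⁻ u, b u ^ 2 ∂μ := by ring

theorem MeasureTheory.Lp.norm_le_of_ae_norm_le_mul_norm_integral_smul_comp_inv_mul
    [TopologicalSpace.MetrizableSpace G] [LocallyCompactSpace G] [IsFiniteMeasureOnCompacts μ]
    {𝕜 E : Type*} [NormedField 𝕜] [NormedAddCommGroup E] [NormedSpace 𝕜 E] [NormedSpace ℝ E]
    {χ : G → 𝕜} (hχ : Continuous χ) (hχ_supp : HasCompactSupport χ) {C : ℝ} (hC : 0 ≤ C)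
    (φ f : Lp E 2 μ) (hf : ∀ᵐ t ∂μ, ‖f t‖ ≤ C * ‖∫ s, χ s • φ (s⁻¹ * t) ∂μ‖) :
    ‖f‖ ≤ C * (∫ s, ‖χ s‖ ∂μ) * ‖φ‖ := by
  set a : G → ℝ≥0∞ := fun s => ‖χ s‖ₑ
  set b : G → ℝ≥0∞ := fun u => ‖φ u‖ₑ
  set c := ENNReal.ofReal C
  obtain ⟨T, hT, hfT, _⟩ := ((Lp.memLp f).aefinStronglyMeasurable two_ne_zero
    ENNReal.ofNat_ne_top).exists_set_sigmaFinite
  have hχ_int : Integrable χ μ := hχ.integrable_of_hasCompactSupport hχ_supp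
  have hf_enorm : ∀ᵐ t ∂μ, ‖f t‖ₑ ≤ c * ∫⁻ s, a s * b (s⁻¹ * t) ∂μ := by
    filter_upwards [hf] with t ht
    calc ‖f t‖ₑ ≤ c * ‖∫ s, χ s • φ (s⁻¹ * t) ∂μ‖ₑ := by
          rw [← ofReal_norm, ← ofReal_norm, ← ENNReal.ofReal_mul hC]
          exact ENNReal.ofReal_le_ofReal ht
      _ ≤ c * ∫⁻ s, a s * b (s⁻¹ * t) ∂μ := by
          gcongr
          exact (enorm_integral_le_lintegral_enorm _).trans_eq (by simp only [enorm_smul, a, b])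
  have hf_sq : ∫⁻ t, ‖f t‖ₑ ^ 2 ∂μ ≤ (c * ∫⁻ s, a s ∂μ) ^ 2 * ∫⁻ u, b u ^ 2 ∂μ :=
    calc ∫⁻ t, ‖f t‖ₑ ^ 2 ∂μ = ∫⁻ t in T, ‖f t‖ₑ ^ 2 ∂μ := by
          rw [← lintegral_add_compl _ hT,
            lintegral_congr_ae (g := fun _ => 0) (hfT.mono fun t ht => by simp [ht]),
            lintegral_zero, add_zero]
      _ ≤ ∫⁻ t in T, c ^ 2 * (∫⁻ s, a s * b (s⁻¹ * t) ∂μ) ^ 2 ∂μ :=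
          lintegral_mono_ae <| ae_restrict_of_ae <| hf_enorm.mono fun t ht => by
            rw [← mul_pow]; gcongr
      _ = c ^ 2 * ∫⁻ t in T, (∫⁻ s, a s * b (s⁻¹ * t) ∂μ) ^ 2 ∂μ :=
          lintegral_const_mul' _ _ (by finiteness)
      _ ≤ c ^ 2 * ((∫⁻ s, a s ∂μ) ^ 2 * ∫⁻ u, b u ^ 2 ∂μ) := by
          gcongr
          exact setLIntegral_sq_lintegral_mul_comp_inv_mul_le hχ.enorm.measurable
            (hχ_supp.comp_left enorm_zero) hχ_int.2.ne (Lp.stronglyMeasurable φ).enorm T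
      _ = (c * ∫⁻ s, a s ∂μ) ^ 2 * ∫⁻ u, b u ^ 2 ∂μ := by ring
  have hf_eLpNorm : eLpNorm f 2 μ ≤ c * (∫⁻ s, a s ∂μ) * eLpNorm φ 2 μ := by
    rw [← ENNReal.pow_le_pow_left_iff two_ne_zero, mul_pow, sq_eLpNorm_two, sq_eLpNorm_two]
    exact hf_sq
  calc ‖f‖ = (eLpNorm f 2 μ).toReal := Lp.norm_def f
    _ ≤ (c * (∫⁻ s, a s ∂μ) * eLpNorm φ 2 μ).toReal :=
        ENNReal.toReal_mono (ENNReal.mul_ne_top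
          (ENNReal.mul_ne_top ENNReal.ofReal_ne_top hχ_int.2.ne) (Lp.eLpNorm_ne_top φ)) hf_eLpNorm
    _ = C * (∫ s, ‖χ s‖ ∂μ) * ‖φ‖ := by
        rw [ENNReal.toReal_mul, ENNReal.toReal_mul, ENNReal.toReal_ofReal hC,
          integral_norm_eq_lintegral_enorm hχ_int.1, Lp.norm_def]

theorem opNorm_sub_le_of_ae_apply_eq_apply_integral_smul_comp_inv_mul
    [TopologicalSpace.MetrizableSpace G] [LocallyCompactSpace G] [IsFiniteMeasureOnCompacts μ]
    {𝕜 E : Type*} [NontriviallyNormedField 𝕜] [NormedAddCommGroup E] [NormedSpace 𝕜 E]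
    [NormedSpace ℝ E]
    {χ : G → 𝕜} (hχ : Continuous χ) (hχ_supp : HasCompactSupport χ)
    {D₁ D₂ : G → E →L[𝕜] E} {A₁ A₂ : Lp E 2 μ →L[𝕜] Lp E 2 μ}
    (hA₁ : ∀ φ : Lp E 2 μ, ∀ᵐ t ∂μ, A₁ φ t = D₁ t (∫ s, χ s • φ (s⁻¹ * t) ∂μ))
    (hA₂ : ∀ φ : Lp E 2 μ, ∀ᵐ t ∂μ, A₂ φ t = D₂ t (∫ s, χ s • φ (s⁻¹ * t) ∂μ))
    {C : ℝ} (hC : 0 ≤ C) (hD : ∀ t, ‖D₁ t - D₂ t‖ ≤ C) :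
    ‖A₁ - A₂‖ ≤ C * ∫ s, ‖χ s‖ ∂μ := by
  refine ContinuousLinearMap.opNorm_le_bound _ (by positivity) fun φ => ?_
  refine Lp.norm_le_of_ae_norm_le_mul_norm_integral_smul_comp_inv_mul hχ hχ_supp hC φ _ ?_
  filter_upwards [hA₁ φ, hA₂ φ, Lp.coeFn_sub (A₁ φ) (A₂ φ)] with t h₁ h₂ h_sub
  rw [sub_apply, h_sub, Pi.sub_apply, h₁, h₂, ← sub_apply]
  exact (ContinuousLinearMap.le_opNorm _ _).trans (by gcongr; exact hD t)

end Convolution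

theorem tendstoUniformly_comp_act_of_tendsto_cocompact {Y G E : Type*} [TopologicalSpace Y]
    [WeaklyLocallyCompactSpace Y] [TopologicalSpace G] [UniformSpace E] {act : Y → G → Y}
    (hcont : Continuous fun p : Y × G => act p.1 p.2)
    (hproper : ∀ K L : Set Y, IsCompact K → IsCompact L →
      IsCompact {t : G | ∃ k ∈ K, act k t ∈ L})
    {f : Y → E} (hf : Continuous f) {x : E} (hfx : Tendsto f (cocompact Y) (𝓝 x)) (y : Y) :
    TendstoUniformly (fun y' t => f (act y' t)) (fun t => f (act y t)) (𝓝 y) := by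
  intro u hu
  obtain ⟨v, hv, hv_symm, hvu⟩ := comp_symm_mem_uniformity_sets hu
  obtain ⟨L, hL, hLv⟩ := mem_cocompact.1 (hfx (mem_nhds_left x hv))
  obtain ⟨K, hK, hKy⟩ := exists_compact_mem_nhds y
  obtain ⟨W, hW, hWu⟩ := (hproper K L hK hL).mem_uniformity_of_prod
    (f := fun y' t => f (act y' t)) (s := univ) (hf.comp hcont).continuousOn (mem_univ y)
    (symm_le_uniformity hu)
  rw [nhdsWithin_univ] at hW
  filter_upwards [hKy, hW] with y' hy'K hy'W t
  by_cases ht : ∃ k ∈ K, act k t ∈ L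
  · exact hWu y' hy'W t ht
  · push Not at ht
    exact hvu ⟨x, SetRel.symm v (hLv (ht y (mem_of_mem_nhds hKy))), hLv (ht y' hy'K)⟩

theorem continuous_of_norm_sub_le_of_tendstoUniformly {Y ι E F : Type*} [TopologicalSpace Y]
    [PseudoMetricSpace E] [SeminormedAddCommGroup F] {A : Y → F} {D : Y → ι → E}
    (hD : ∀ y, TendstoUniformly D (D y) (𝓝 y)) {K : ℝ}
    (hA : ∀ y y' C, 0 ≤ C → (∀ t, dist (D y t) (D y' t) ≤ C) → ‖A y - A y'‖ ≤ C * K) :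
    Continuous A := by
  refine continuous_iff_continuousAt.2 fun y => Metric.tendsto_nhds.2 fun ε hε => ?_
  have hδ : 0 < ε / (|K| + 1) := by positivity
  filter_upwards [Metric.tendstoUniformly_iff.1 (hD y) _ hδ] with y' hy'
  calc dist (A y') (A y) = ‖A y' - A y‖ := dist_eq_norm _ _
    _ ≤ ε / (|K| + 1) * K := hA y' y _ hδ.le fun t => by rw [dist_comm]; exact (hy' t).le
    _ ≤ ε / (|K| + 1) * |K| := by gcongr; exact le_abs_self K
    _ < ε := by
      rw [div_mul_eq_mul_div, div_lt_iff₀ (by positivity)]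
      linarith

theorem stmt_1_general {Y G H₀ : Type*}
    [TopologicalSpace Y] [LocallyCompactSpace Y]
    [Group G] [TopologicalSpace G] [IsTopologicalGroup G]
    [TopologicalSpace.MetrizableSpace G] [LocallyCompactSpace G]
    [MeasurableSpace G] [BorelSpace G]
    (μ : Measure G) [μ.IsHaarMeasure]
    [NormedAddCommGroup H₀] [InnerProductSpace ℂ H₀]
    (act : Y → G → Y)
    (hcont : Continuous fun p : Y × G => act p.1 p.2)
    (hproper : ∀ K L : Set Y, IsCompact K → IsCompact L →
      IsCompact {t : G | ∃ k ∈ K, act k t ∈ L})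
    (d : Y → H₀ →L[ℂ] H₀) (hd : Continuous d)
    (hd0 : Tendsto d (cocompact Y) (𝓝 0))
    (χ : G → ℂ) (hχ : Continuous χ) (hχc : HasCompactSupport χ)
    (A : Y → (Lp H₀ 2 μ →L[ℂ] Lp H₀ 2 μ))
    (hA : ∀ (y : Y) (φ : Lp H₀ 2 μ), ∀ᵐ t ∂μ,
      (A y φ) t = d (act y t⁻¹) (∫ s, χ s • (φ (s⁻¹ * t)) ∂μ)) :
    Continuous A :=
  -- without `F`, unification does not identify the topology of `Continuous A` with the norm one
  continuous_of_norm_sub_le_of_tendstoUniformly (F := Lp H₀ 2 μ →L[ℂ] Lp H₀ 2 μ)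
    (D := fun y t => d (act y t⁻¹)) (K := ∫ s, ‖χ s‖ ∂μ)
    (fun y => (tendstoUniformly_comp_act_of_tendsto_cocompact hcont hproper hd hd0 y).comp (·⁻¹))
    fun y y' _ hC hD => opNorm_sub_le_of_ae_apply_eq_apply_integral_smul_comp_inv_mul hχ hχc
      (hA y) (hA y') hC fun t => by rw [← dist_eq_norm]; exact hD t

/-- continuity in operator norm of the family of product–convolution
operators `A(y)φ(t) = d(y·t⁻¹) ∫_G χ(s) φ(s⁻¹t) ds` on `L²(G,H₀)`, for a proper
continuous action of a metrizable locally compact group `G` on a metrizable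
locally compact space `Y`, `d` a compact-operator-valued norm-continuous function
vanishing at infinity, and `χ` continuous with compact support. -/
theorem stmt_1 {Y G H₀ : Type*}
    [TopologicalSpace Y] [TopologicalSpace.MetrizableSpace Y] [LocallyCompactSpace Y]
    [Group G] [TopologicalSpace G] [IsTopologicalGroup G]
    [TopologicalSpace.MetrizableSpace G] [LocallyCompactSpace G]
    [MeasurableSpace G] [BorelSpace G]
    (μ : Measure G) [μ.IsHaarMeasure]
    [NormedAddCommGroup H₀] [InnerProductSpace ℂ H₀] [CompleteSpace H₀]
    [TopologicalSpace.SeparableSpace H₀]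
    (act : Y → G → Y)
    (hcont : Continuous fun p : Y × G => act p.1 p.2)
    (hone : ∀ y, act y 1 = y)
    (hmul : ∀ (y : Y) (s t : G), act (act y s) t = act y (s * t))
    (hproper : ∀ K L : Set Y, IsCompact K → IsCompact L →
      IsCompact {t : G | ∃ k ∈ K, act k t ∈ L})
    (d : Y → H₀ →L[ℂ] H₀) (hd : Continuous d)
    (hdcpt : ∀ y, IsCompactOperator (d y))
    (hd0 : Tendsto d (cocompact Y) (𝓝 0))
    (χ : G → ℂ) (hχ : Continuous χ) (hχc : HasCompactSupport χ)
    (A : Y → (Lp H₀ 2 μ →L[ℂ] Lp H₀ 2 μ))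
    (hA : ∀ (y : Y) (φ : Lp H₀ 2 μ), ∀ᵐ t ∂μ,
      (A y φ) t = d (act y t⁻¹) (∫ s, χ s • (φ (s⁻¹ * t)) ∂μ)) :
    Continuous A :=
  stmt_1_general μ act hcont hproper d hd hd0 χ hχ hχc A hA
end

section
/- Let X × G → X be a continuous right action of a connected locally compact topological group G on a quasi-compact topological space X (compact but not necessarily Hausdorff). Assume: (1) A⁻, A⁺ ⊆ X are closed G-invariant subsets which have disjoint open neighborhoods; (2) for every y in Y := X ∖ (A⁻ ∪ A⁺) there exist nets {t_j⁻}_{j∈J} and {t_j⁺}_{j∈J} in G for which the net {y·t_j⁻}_{j∈J} has a limit point in A⁻ and the net {y·t_j⁺}_{j∈J} has a limit point in A⁺. Then Y is an open G-invariant subset of X and the orbit space Y/G, with the quotient topology, is quasi-compact. -/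
open Topology Set

/-!
Let `K := (Uₘ ∪ Uₚ)ᶜ`, where `Uₘ ⊇ A⁻` and `Uₚ ⊇ A⁺` are disjoint and open. It is closed in the
quasi-compact `X`, hence quasi-compact, and it lies in `Y`. Every orbit in `Y` is connected (as
`G` is) and its closure meets both `Uₘ` and `Uₚ`, so the orbit cannot lie in `Uₘ ∪ Uₚ`: it meets
`K`. Hence `Y/G` is a continuous image of the quasi-compact set `K`.
-/

theorem IsPreconnected.inter_compl_union_nonempty {X : Type*} [TopologicalSpace X]
    {s U V : Set X} (hs : IsPreconnected s) (hU : IsOpen U) (hV : IsOpen V) (hUV : Disjoint U V)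
    (hsU : (closure s ∩ U).Nonempty) (hsV : (closure s ∩ V).Nonempty) :
    (s ∩ (U ∪ V)ᶜ).Nonempty := by
  by_contra h
  have hsUV : s ⊆ U ∪ V := by
    rwa [← sdiff_eq, sdiff_nonempty, not_not] at h
  obtain ⟨x, -, hxU, hxV⟩ := hs U V hU hV hsUV
    ((closure_inter_open_nonempty_iff hU).1 hsU) ((closure_inter_open_nonempty_iff hV).1 hsV)
  exact disjoint_left.1 hUV hxU hxV

theorem Quot.compactSpace_of_isCompact {α : Type*} [TopologicalSpace α] {r : α → α → Prop}
    {K : Set α} (hK : IsCompact K) (hKr : ∀ a, ∃ b ∈ K, Quot.mk r b = Quot.mk r a) :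
    CompactSpace (Quot r) := by
  have : CompactSpace K := isCompact_iff_compactSpace.1 hK
  refine Function.Surjective.compactSpace (f := fun b : K => Quot.mk r b.1)
    (continuous_quot_mk.comp continuous_subtype_val) (Quot.ind fun a => ?_)
  obtain ⟨b, hbK, hb⟩ := hKr a
  exact ⟨⟨b, hbK⟩, hb⟩

theorem bijective_act {X G : Type*} [Group G] (act : X → G → X) (hone : ∀ x, act x 1 = x)
    (hmul : ∀ (x : X) (s t : G), act (act x s) t = act x (s * t)) (t : G) :
    Function.Bijective fun x => act x t :=
  Function.bijective_iff_has_inverse.2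
    ⟨fun x => act x t⁻¹, fun x => by simp [hmul, hone], fun x => by simp [hmul, hone]⟩

theorem stmt_6_general {X G : Type*} [TopologicalSpace X] [CompactSpace X]
    [Group G] [TopologicalSpace G] [ConnectedSpace G]
    (act : X → G → X)
    (hcont : Continuous fun p : X × G => act p.1 p.2)
    (hone : ∀ x, act x 1 = x)
    (hmul : ∀ (x : X) (s t : G), act (act x s) t = act x (s * t))
    (Am Ap : Set X) (hAmcl : IsClosed Am) (hApcl : IsClosed Ap)
    (hAminv : ∀ t : G, (fun x => act x t) '' Am = Am)
    (hApinv : ∀ t : G, (fun x => act x t) '' Ap = Ap)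
    (hsep : ∃ Um Up : Set X, IsOpen Um ∧ IsOpen Up ∧ Am ⊆ Um ∧ Ap ⊆ Up ∧ Um ∩ Up = ∅)
    (hlim : ∀ y ∈ (Am ∪ Ap)ᶜ,
      (closure (Set.range fun t => act y t) ∩ Am).Nonempty ∧
      (closure (Set.range fun t => act y t) ∩ Ap).Nonempty) :
    IsOpen (Am ∪ Ap)ᶜ ∧
    (∀ t : G, (fun x => act x t) '' (Am ∪ Ap)ᶜ = (Am ∪ Ap)ᶜ) ∧
    CompactSpace
      (Quot fun a b : ((Am ∪ Ap)ᶜ : Set X) => ∃ t : G, act a.1 t = b.1) := by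
  obtain ⟨Um, Up, hUm, hUp, hAmUm, hApUp, hUmUp⟩ := hsep
  refine ⟨(hAmcl.union hApcl).isOpen_compl, fun t => ?_, ?_⟩
  · rw [image_compl_eq (bijective_act act hone hmul t), image_union, hAminv, hApinv]
  have hKY : (Um ∪ Up)ᶜ ⊆ (Am ∪ Ap)ᶜ := compl_subset_compl.2 (union_subset_union hAmUm hApUp)
  have hK : IsCompact (Subtype.val ⁻¹' (Um ∪ Up)ᶜ : Set ((Am ∪ Ap)ᶜ : Set X)) :=
    IsInducing.subtypeVal.isCompact_preimage' (hUm.union hUp).isClosed_compl.isCompact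
      (by rwa [Subtype.range_coe])
  refine Quot.compactSpace_of_isCompact hK fun y => ?_
  have horbit : IsPreconnected (range fun t => act y t) :=
    (isConnected_range (hcont.comp (continuous_const.prodMk continuous_id))).isPreconnected
  obtain ⟨hclAm, hclAp⟩ := hlim y y.2
  obtain ⟨-, ⟨t, rfl⟩, hyt⟩ := horbit.inter_compl_union_nonempty hUm hUp
    (disjoint_iff_inter_eq_empty.2 hUmUp) (hclAm.mono (inter_subset_inter_right _ hAmUm))
    (hclAp.mono (inter_subset_inter_right _ hApUp))
  exact ⟨⟨act y t, hKY hyt⟩, hyt, Quot.sound ⟨t⁻¹, by simp [hmul, hone]⟩⟩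

/-- for a continuous right action of a connected locally compact group `G`
on a quasi-compact space `X`, if `A⁻, A⁺` are closed invariant sets with disjoint open
neighborhoods such that the orbit of every point `y` of `Y := X ∖ (A⁻ ∪ A⁺)` has cluster
points in both `A⁻` and `A⁺`, then `Y` is open and invariant and the orbit space `Y/G`
(with the quotient topology) is quasi-compact. -/
theorem stmt_6 {X G : Type*} [TopologicalSpace X] [CompactSpace X]
    [Group G] [TopologicalSpace G] [IsTopologicalGroup G]
    [LocallyCompactSpace G] [ConnectedSpace G]
    (act : X → G → X)
    (hcont : Continuous fun p : X × G => act p.1 p.2)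
    (hone : ∀ x, act x 1 = x)
    (hmul : ∀ (x : X) (s t : G), act (act x s) t = act x (s * t))
    (Am Ap : Set X) (hAmcl : IsClosed Am) (hApcl : IsClosed Ap)
    (hAminv : ∀ t : G, (fun x => act x t) '' Am = Am)
    (hApinv : ∀ t : G, (fun x => act x t) '' Ap = Ap)
    (hsep : ∃ Um Up : Set X, IsOpen Um ∧ IsOpen Up ∧ Am ⊆ Um ∧ Ap ⊆ Up ∧ Um ∩ Up = ∅)
    (hlim : ∀ y ∈ (Am ∪ Ap)ᶜ,
      (closure (Set.range fun t => act y t) ∩ Am).Nonempty ∧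
      (closure (Set.range fun t => act y t) ∩ Ap).Nonempty) :
    IsOpen (Am ∪ Ap)ᶜ ∧
    (∀ t : G, (fun x => act x t) '' (Am ∪ Ap)ᶜ = (Am ∪ Ap)ᶜ) ∧
    CompactSpace
      (Quot fun a b : ((Am ∪ Ap)ᶜ : Set X) => ∃ t : G, act a.1 t = b.1) :=
  stmt_6_general act hcont hone hmul Am Ap hAmcl hApcl hAminv hApinv hsep hlim
end

section
/- Let H₀ be a separable complex Hilbert space and g : ℝ → B(H₀) a norm-continuous function such that 0 ≤ g(t) ≤ 1 in the Loewner order (each g(t) is a positive self-adjoint contraction) for every t ∈ ℝ, and lim_{t→∞} ‖g(t) − 1‖ = 0. If η ∈ L²(ℝ,H₀) satisfies η(t) = 2 g(t) (β∗η)(t) = 2 g(t) ∫₀^∞ e^{−s} η(t−s) ds for almost every t ∈ ℝ, then η = 0. Equivalently, Ker(1 − 2M_gT) = {0}, where M_g is the multiplication operator (M_gη)(t) = g(t)η(t) on L²(ℝ,H₀). -/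
/-!
Put `F(t) = ∫_{-∞}^t e^s η(s) ds`. Since `(β∗η)(t) = e^{-t} F(t)`, the equation says
`F' = 2 g F`. Positivity of `g` makes `‖F‖²` nondecreasing, and where `‖g - 1‖ ≤ 1/4` it
satisfies `(‖F‖²)' ≥ 3 ‖F‖²`, so `e^{-3t} ‖F(t)‖²` is nondecreasing there. As `η ∈ L²`,
`‖F(t)‖ ≤ C e^t`, so `e^{-3t} ‖F(t)‖² → 0`; hence `F` vanishes on a half-line, then everywhere,
and `η = 2 g e^{-t} F = 0`.
-/

open MeasureTheory Set Filter Topology Real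

section Primitive

variable {E : Type*} [NormedAddCommGroup E] {f g : ℝ → E}

theorem intervalIntegrable_of_integrableOn_Iic (hf : ∀ t, IntegrableOn f (Iic t)) (a b : ℝ) :
    IntervalIntegrable f volume a b :=
  ((hf (max a b)).mono_set fun _ hx => hx.2).intervalIntegrable

variable [NormedSpace ℝ E]

theorem integral_Iic_eq_add_intervalIntegral (hf : ∀ t, IntegrableOn f (Iic t)) (a : ℝ) :
    (fun u => ∫ s in Iic u, f s) = fun u => (∫ s in Iic a, f s) + ∫ s in a..u, f s :=
  funext fun u => by rw [← intervalIntegral.integral_Iic_sub_Iic (hf a) (hf u), add_sub_cancel]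

theorem continuous_integral_Iic (hf : ∀ t, IntegrableOn f (Iic t)) :
    Continuous fun u => ∫ s in Iic u, f s := by
  rw [integral_Iic_eq_add_intervalIntegral hf 0]
  exact continuous_const.add
    (intervalIntegral.continuous_primitive (intervalIntegrable_of_integrableOn_Iic hf) 0)

variable [CompleteSpace E]

theorem hasDerivAt_integral_Iic (hf : ∀ t, IntegrableOn f (Iic t)) (hfc : Continuous f)
    (t : ℝ) : HasDerivAt (fun u => ∫ s in Iic u, f s) (f t) t := by
  rw [integral_Iic_eq_add_intervalIntegral hf t]
  exact (intervalIntegral.integral_hasDerivAt_right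
    (intervalIntegrable_of_integrableOn_Iic hf t t)
    hfc.aestronglyMeasurable.stronglyMeasurableAtFilter hfc.continuousAt).const_add _

theorem hasDerivAt_integral_Iic_of_ae_eq (hf : ∀ t, IntegrableOn f (Iic t))
    (hfg : f =ᵐ[volume] g) (hg : Continuous g) (t : ℝ) :
    HasDerivAt (fun u => ∫ s in Iic u, f s) (g t) t := by
  have hfg' : (fun u => ∫ s in Iic u, f s) = fun u => ∫ s in Iic u, g s :=
    funext fun u => integral_congr_ae (ae_restrict_of_ae hfg)
  rw [hfg']
  exact hasDerivAt_integral_Iic (fun u => (hf u).congr_fun_ae (ae_restrict_of_ae hfg)) hg t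

end Primitive

section ExpWeight

variable {E : Type*} [NormedAddCommGroup E] {η : ℝ → E}

theorem integrableOn_Iic_exp_norm_sq (hη : MemLp η 2) (t : ℝ) :
    IntegrableOn (fun s => (exp s + exp t * ‖η s‖ ^ 2) / 2) (Iic t) :=
  ((integrableOn_exp_Iic t).add
    ((memLp_two_iff_integrable_sq_norm hη.1).1 hη |>.integrableOn.const_mul (exp t))).div_const 2

variable [NormedSpace ℝ E]

theorem integral_Ioi_exp_neg_smul_sub (η : ℝ → E) (t : ℝ) :
    ∫ s in Ioi (0 : ℝ), exp (-s) • η (t - s) = exp (-t) • ∫ s in Iic t, exp s • η s := by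
  have hpre : (fun s : ℝ => t - s) ⁻¹' Ioi 0 = Iio t := by
    ext
    simp
  rw [← (Measure.measurePreserving_sub_left volume t).setIntegral_preimage_emb
    (MeasurableEquiv.subLeft t).measurableEmbedding, hpre, ← integral_smul,
    setIntegral_congr_set Iio_ae_eq_Iic]
  refine setIntegral_congr_fun measurableSet_Iic fun s _ => ?_
  rw [sub_sub_cancel, smul_smul, ← exp_add, neg_sub, sub_eq_neg_add]

/-- AM-GM `e^s ‖x‖ ≤ e^s (1 + ‖x‖²) / 2`, then `e^s ≤ e^t` in front of `‖x‖²`. -/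
theorem norm_exp_smul_le {s t : ℝ} (hst : s ≤ t) (x : E) :
    ‖exp s • x‖ ≤ (exp s + exp t * ‖x‖ ^ 2) / 2 := by
  rw [norm_smul, norm_of_nonneg (exp_pos s).le]
  nlinarith [mul_nonneg (exp_pos s).le (sq_nonneg (1 - ‖x‖)),
    mul_le_mul_of_nonneg_right (exp_le_exp.2 hst) (sq_nonneg ‖x‖)]

theorem integrableOn_Iic_exp_smul (hη : MemLp η 2) (t : ℝ) :
    IntegrableOn (fun s => exp s • η s) (Iic t) :=
  (integrableOn_Iic_exp_norm_sq hη t).mono'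
    (continuous_exp.aestronglyMeasurable.smul hη.1).restrict
    ((ae_restrict_mem measurableSet_Iic).mono fun _ hs => norm_exp_smul_le hs _)

theorem norm_integral_Iic_exp_smul_le (hη : MemLp η 2) (t : ℝ) :
    ‖∫ s in Iic t, exp s • η s‖ ≤ (1 + ∫ s, ‖η s‖ ^ 2) / 2 * exp t := by
  have hsq : Integrable (fun s => ‖η s‖ ^ 2) := (memLp_two_iff_integrable_sq_norm hη.1).1 hη
  calc ‖∫ s in Iic t, exp s • η s‖
      ≤ ∫ s in Iic t, (exp s + exp t * ‖η s‖ ^ 2) / 2 :=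
        norm_integral_le_of_norm_le (integrableOn_Iic_exp_norm_sq hη t)
          ((ae_restrict_mem measurableSet_Iic).mono fun _ hs => norm_exp_smul_le hs _)
    _ = (exp t + exp t * ∫ s in Iic t, ‖η s‖ ^ 2) / 2 := by
        rw [integral_div, integral_add (integrableOn_exp_Iic t) (hsq.integrableOn.const_mul _),
          integral_const_mul, integral_exp_Iic]
    _ ≤ (exp t + exp t * ∫ s, ‖η s‖ ^ 2) / 2 := by
        gcongr (exp t + exp t * ?_) / 2
        exact setIntegral_le_integral hsq (Eventually.of_forall fun s => by positivity)
    _ = (1 + ∫ s, ‖η s‖ ^ 2) / 2 * exp t := by ring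

end ExpWeight

theorem nonpos_of_hasDerivAt_of_mul_le_deriv {φ φ' : ℝ → ℝ} {b c C T : ℝ}
    (hφ : ∀ t, HasDerivAt φ (φ' t) t) (hφ'_nonneg : ∀ t, 0 ≤ φ' t)
    (hgrowth : ∀ t ≥ T, c * φ t ≤ φ' t) (hbound : ∀ t, φ t ≤ C * exp (b * t)) (hbc : b < c)
    (t : ℝ) : φ t ≤ 0 := by
  set ψ : ℝ → ℝ := fun u => exp (-c * u) * φ u
  have hψ : ∀ u, HasDerivAt ψ (exp (-c * u) * (φ' u - c * φ u)) u := fun u =>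
    (((hasDerivAt_id' u).const_mul (-c)).exp.mul (hφ u)).congr_deriv (by ring)
  have hψ_mono : MonotoneOn ψ (Ici T) :=
    monotoneOn_of_deriv_nonneg (convex_Ici T) (fun u _ => (hψ u).continuousAt.continuousWithinAt)
      (fun u _ => (hψ u).differentiableAt.differentiableWithinAt) fun u hu => by
        rw [interior_Ici] at hu
        rw [(hψ u).deriv]
        exact mul_nonneg (exp_pos _).le (sub_nonneg.2 (hgrowth u hu.le))
  have hψ_le : ∀ u, ψ u ≤ C * exp ((b - c) * u) := fun u => by
    calc ψ u ≤ exp (-c * u) * (C * exp (b * u)) :=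
          mul_le_mul_of_nonneg_left (hbound u) (exp_pos _).le
      _ = C * exp ((b - c) * u) := by rw [mul_left_comm, ← exp_add]; ring_nf
  have hlim : Tendsto (fun u => C * exp ((b - c) * u)) atTop (𝓝 0) := by
    simpa using (tendsto_exp_atBot.comp
      (tendsto_id.const_mul_atTop_of_neg (sub_neg.2 hbc))).const_mul C
  have hψ_nonpos : ψ (max t T) ≤ 0 :=
    ge_of_tendsto hlim <| (eventually_ge_atTop (max t T)).mono fun u hu =>
      (hψ_mono (le_max_right t T) ((le_max_right t T).trans hu) hu).trans (hψ_le u)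
  have hφ_mono : Monotone φ :=
    monotone_of_deriv_nonneg (fun u => (hφ u).differentiableAt)
      fun u => (hφ u).deriv ▸ hφ'_nonneg u
  exact (hφ_mono (le_max_left t T)).trans
    (nonpos_of_mul_nonpos_right hψ_nonpos (exp_pos _))

section Operator

variable {𝕜 H : Type*} [RCLike 𝕜] [NormedAddCommGroup H] [InnerProductSpace 𝕜 H]

open RCLike in
theorem one_sub_norm_sub_one_mul_norm_sq_le_re_inner (A : H →L[𝕜] H) (x : H) :
    (1 - ‖A - 1‖) * ‖x‖ ^ 2 ≤ re (inner 𝕜 (A x) x) := by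
  have h : re (inner 𝕜 ((1 - A) x) x) ≤ ‖1 - A‖ * ‖x‖ ^ 2 := by
    calc re (inner 𝕜 ((1 - A) x) x) ≤ ‖(1 - A) x‖ * ‖x‖ :=
          (re_le_norm _).trans (norm_inner_le_norm _ _)
      _ ≤ ‖1 - A‖ * ‖x‖ * ‖x‖ := by gcongr; exact (1 - A).le_opNorm x
      _ = ‖1 - A‖ * ‖x‖ ^ 2 := by ring
  rw [sub_apply, inner_sub_left, map_sub, one_apply_eq_self,
    inner_self_eq_norm_sq, norm_sub_rev] at h
  linarith

variable [NormedSpace ℝ H]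

variable (𝕜) in
open RCLike in
theorem hasDerivAt_norm_sq_re_inner {F : ℝ → H} {F' : H} {t : ℝ} (hF : HasDerivAt F F' t) :
    HasDerivAt (fun u => ‖F u‖ ^ 2) (2 * re (inner 𝕜 F' (F t))) t := by
  have h := reCLM.hasFDerivAt.comp_hasDerivAt t (hF.inner 𝕜 hF)
  simp only [Function.comp_def, reCLM_apply, inner_self_eq_norm_sq, map_add,
    inner_re_symm (F t)] at h
  exact h.congr_deriv (two_mul _).symm

open RCLike in
theorem eq_zero_of_hasDerivAt_eq_two_smul_apply {A : ℝ → H →L[𝕜] H} {F : ℝ → H} {C : ℝ}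
    (hA_pos : ∀ t, (A t).IsPositive) (hA_lim : Tendsto (fun t => ‖A t - 1‖) atTop (𝓝 0))
    (hF : ∀ t, HasDerivAt F ((2 : ℝ) • A t (F t)) t) (hF_bound : ∀ t, ‖F t‖ ≤ C * exp t) :
    F = 0 := by
  obtain ⟨T, hT⟩ :=
    eventually_atTop.1 (hA_lim.eventually (ge_mem_nhds (by norm_num : (0 : ℝ) < 1 / 4)))
  have hgrowth : ∀ t ≥ T, 3 * ‖F t‖ ^ 2 ≤ 4 * re (inner 𝕜 (A t (F t)) (F t)) := fun t ht => by
    nlinarith [one_sub_norm_sub_one_mul_norm_sq_le_re_inner (A t) (F t), hT t ht,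
      sq_nonneg ‖F t‖]
  have hbound : ∀ t, ‖F t‖ ^ 2 ≤ C ^ 2 * exp (2 * t) := fun t => by
    calc ‖F t‖ ^ 2 ≤ (C * exp t) ^ 2 := pow_le_pow_left₀ (norm_nonneg _) (hF_bound t) 2
      _ = C ^ 2 * exp (2 * t) := by rw [mul_pow, ← exp_nat_mul]; norm_num
  have hφ : ∀ t, HasDerivAt (fun u => ‖F u‖ ^ 2) (4 * re (inner 𝕜 (A t (F t)) (F t))) t :=
    fun t => (hasDerivAt_norm_sq_re_inner 𝕜 (hF t)).congr_deriv <| by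
      rw [two_smul, inner_add_left, map_add]
      ring
  funext t
  have h := nonpos_of_hasDerivAt_of_mul_le_deriv hφ
    (fun u => mul_nonneg zero_le_four ((hA_pos u).re_inner_nonneg_left (F u))) hgrowth hbound
    (by norm_num) t
  exact pow_eq_zero_iff two_ne_zero |>.1 (le_antisymm h (sq_nonneg _)) |> norm_eq_zero.1

end Operator

theorem stmt_8_general {H₀ : Type*} [NormedAddCommGroup H₀] [InnerProductSpace ℂ H₀]
    [CompleteSpace H₀]
    (g : ℝ → H₀ →L[ℂ] H₀) (hg_cont : Continuous g)
    (hg_pos : ∀ t : ℝ, (g t).IsPositive)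
    (hg_lim : Tendsto (fun t => ‖g t - 1‖) atTop (𝓝 0))
    (η : Lp H₀ 2 (volume : Measure ℝ))
    (hη : ∀ᵐ t ∂(volume : Measure ℝ),
      η t = (2 : ℝ) • (g t) (∫ s in Ioi (0 : ℝ), Real.exp (-s) • η (t - s))) :
    η = 0 := by
  set F : ℝ → H₀ := fun t => ∫ s in Iic t, exp s • η s
  have hconv : ∀ t, ∫ s in Ioi (0 : ℝ), exp (-s) • η (t - s) = exp (-t) • F t :=
    integral_Ioi_exp_neg_smul_sub η
  have hint := integrableOn_Iic_exp_smul (Lp.memLp η)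
  have hode : (fun s => exp s • η s) =ᵐ[volume] fun s => (2 : ℝ) • g s (F s) := by
    filter_upwards [hη] with s hs
    rw [hs, hconv, (g s).map_smul_of_tower, smul_comm (2 : ℝ), smul_smul, ← exp_add,
      add_neg_cancel, exp_zero, one_smul]
  have hF_zero : F = 0 := eq_zero_of_hasDerivAt_eq_two_smul_apply hg_pos hg_lim
    (hasDerivAt_integral_Iic_of_ae_eq hint hode
      ((hg_cont.clm_apply (continuous_integral_Iic hint)).const_smul (2 : ℝ)))
    (norm_integral_Iic_exp_smul_le (Lp.memLp η))
  refine Lp.ext ?_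
  filter_upwards [hη, Lp.coeFn_zero H₀ 2 volume] with t hηt h0t
  rw [hηt, h0t, hconv, hF_zero, Pi.zero_apply, smul_zero, map_zero, smul_zero]

/-- let `H₀` be a separable complex Hilbert space and `g : ℝ → B(H₀)`
norm-continuous with `0 ≤ g(t) ≤ 1` in the Loewner order and `‖g(t) − 1‖ → 0` as
`t → ∞`. If `η ∈ L²(ℝ,H₀)` satisfies `η(t) = 2 g(t) ∫₀^∞ e^{−s} η(t−s) ds` for a.e.
`t`, then `η = 0`; i.e. `Ker(1 − 2M_gT) = {0}`. -/
theorem stmt_8 {H₀ : Type*} [NormedAddCommGroup H₀] [InnerProductSpace ℂ H₀]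
    [CompleteSpace H₀] [TopologicalSpace.SeparableSpace H₀]
    (g : ℝ → H₀ →L[ℂ] H₀) (hg_cont : Continuous g)
    (hg_pos : ∀ t : ℝ, (g t).IsPositive)
    (hg_le : ∀ t : ℝ, (1 - g t).IsPositive)
    (hg_lim : Tendsto (fun t => ‖g t - 1‖) atTop (𝓝 0))
    (η : Lp H₀ 2 (volume : Measure ℝ))
    (hη : ∀ᵐ t ∂(volume : Measure ℝ),
      η t = (2 : ℝ) • (g t) (∫ s in Ioi (0 : ℝ), Real.exp (-s) • η (t - s))) :
    η = 0 :=
  stmt_8_general g hg_cont hg_pos hg_lim η hη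
end

section
/- Let V be a finite-dimensional real normed vector space and D a linear endomorphism of V, with the flow α_D on the one-point compactification V̄ = V ∪ {∞} given by α_D(v,t) = exp(tD)v and α_D(∞,t) = ∞. If the flow α_D has a nontrivial attractor-repeller pair, then D has no nonzero purely imaginary eigenvalue; explicitly, there exist no τ ∈ ℝ∖{0} and vectors v₁, v₂ ∈ V, not both zero, with D v₁ = −τ v₂ and D v₂ = τ v₁. -/
open Filter Topology Set

/-- The ω-limit set `ω(S) = ⋂_{t∈ℝ} Cl(S·[t,∞))` of a set `S` under a right
ℝ-action `act`. -/
def omegaSet {X : Type*} [TopologicalSpace X] (act : X → ℝ → X) (S : Set X) : Set X :=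
  ⋂ t : ℝ, closure {x | ∃ y ∈ S, ∃ s : ℝ, t ≤ s ∧ act y s = x}

/-- The ω*-limit set `ω*(S) = ⋂_{t∈ℝ} Cl(S·(−∞,t])`. -/
def omegaStarSet {X : Type*} [TopologicalSpace X] (act : X → ℝ → X) (S : Set X) : Set X :=
  ⋂ t : ℝ, closure {x | ∃ y ∈ S, ∃ s : ℝ, s ≤ t ∧ act y s = x}

/-- `A` is an attractor for `act` if it has a neighborhood `N` with `ω(N) = A`. -/
def IsAttractorFor {X : Type*} [TopologicalSpace X] (act : X → ℝ → X) (A : Set X) : Prop :=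
  ∃ N : Set X, A ⊆ interior N ∧ omegaSet act N = A

/-- The complementary repeller `A* = {x : ω(x) ∩ A = ∅}` of an attractor `A`. -/
def compRepeller {X : Type*} [TopologicalSpace X] (act : X → ℝ → X) (A : Set X) : Set X :=
  {x | omegaSet act {x} ∩ A = ∅}

/-- The flow `α_D(v,t) = exp(tD)v`, `α_D(∞,t) = ∞`, on the one-point
compactification `V̄ = V ∪ {∞}`. -/
noncomputable def expFlow {V : Type*} [NormedAddCommGroup V] [NormedSpace ℝ V]
    (D : V →L[ℝ] V) (x : OnePoint V) (t : ℝ) : OnePoint V :=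
  OnePoint.map (fun v => NormedSpace.exp (t • D) v) x

/-!
If `iτ` (`τ ≠ 0`) is an eigenvalue of `D`, some `v ≠ 0` is periodic for `α_D`. The scalings
`x ↦ eˢ x` form a flow commuting with `α_D`, and an attractor `A = ω(N)` is invariant under
every such flow: by compactness small scalings push `A ⊆ int N` into `N`, hence into
`ω(N) = A`. A nonempty closed scaling-invariant set contains `0` or `∞`; the scaled copies of
`v` run from `0` to `∞`, and being periodic they lie in `A` once they enter `N`. So `0, ∞ ∈ A`,
and scaling any point into `N` shows that its ω-limit set meets `A`, i.e. `A* = ∅`. Finally,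
when `A* = ∅`, the α-limit set of any `x` contains a point whose orbit enters `int N`; hence the
backward orbit of `x` enters `int N` at arbitrarily negative times and `x ∈ ω(N) = A`. Thus
`A` is everything and `(A, A*)` is trivial.
-/

open omegaLimit

theorem omegaSet_eq_omegaLimit {X : Type*} [TopologicalSpace X] (act : X → ℝ → X)
    (S : Set X) : omegaSet act S = ω⁺ (fun t x => act x t) S := by
  have himage (t : ℝ) : {x | ∃ y ∈ S, ∃ s : ℝ, t ≤ s ∧ act y s = x} =
      image2 (fun t x => act x t) (Ici t) S := by
    ext; simp only [mem_ofPred_eq, mem_image2, mem_Ici]; grind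
  refine Subset.antisymm (subset_iInter₂ fun u hu => ?_) (subset_iInter fun t => ?_)
  · obtain ⟨t, ht⟩ := mem_atTop_sets.1 hu
    exact (iInter_subset _ t).trans (closure_mono (himage t ▸ image2_subset_right ht))
  · exact (biInter_subset_of_mem (Ici_mem_atTop t)).trans (himage t ▸ subset_rfl)

namespace Flow

variable {X : Type*} [TopologicalSpace X] (ϕ : Flow ℝ X)

theorem isInvariant_omegaLimit_atTop (S : Set X) : IsInvariant ϕ (ω⁺ ϕ S) :=
  ϕ.isInvariant_omegaLimit _ S fun t => tendsto_atTop_add_const_left _ t tendsto_id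

theorem isInvariant_omegaLimit_atBot (S : Set X) : IsInvariant ϕ (ω⁻ ϕ S) :=
  ϕ.isInvariant_omegaLimit _ S fun t => tendsto_atBot_add_const_left _ t tendsto_id

theorem subset_omegaLimit_of_isInvariant {A : Set X} (hA : IsInvariant ϕ A) :
    A ⊆ ω⁺ ϕ A := by
  intro a ha
  rw [mem_omegaLimit_iff_frequently]
  refine fun n hn => Eventually.frequently (Eventually.of_forall fun t => ?_)
  refine ⟨ϕ (-t) a, hA (-t) ha, ?_⟩
  rw [mem_preimage, ← map_add, add_neg_cancel, map_zero_apply]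
  exact mem_of_mem_nhds hn

theorem mem_omegaLimit_of_periodic {N : Set X} {y : X} (hy : y ∈ N) {T : ℝ} (hT : 0 < T)
    (hper : ϕ T y = y) : y ∈ ω⁺ ϕ N := by
  have hiter (k : ℕ) : ϕ (k * T) y = y := by
    induction k with
    | zero => simp [map_zero_apply]
    | succ k ih => rw [Nat.cast_succ, add_mul, one_mul, map_add, hper, ih]
  rw [mem_omegaLimit_iff_frequently]
  refine fun n hn => frequently_atTop.2 fun t => ?_
  obtain ⟨k, hk⟩ := exists_nat_ge (t / T)
  refine ⟨k * T, (div_le_iff₀ hT).1 hk, y, hy, ?_⟩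
  rw [mem_preimage, hiter]
  exact mem_of_mem_nhds hn

end Flow

section Attractor

variable {X : Type*} [TopologicalSpace X] {ϕ : Flow ℝ X} {A N : Set X}

theorem mapsTo_of_mapsTo_of_semiconj (hA : ω⁺ ϕ N = A) {g : X → X} (hg : Continuous g)
    (hcomm : ∀ t, Function.Semiconj g (ϕ t) (ϕ t)) (hgA : MapsTo g A N) : MapsTo g A A := by
  have hsub : A ⊆ ω⁺ ϕ A :=
    ϕ.subset_omegaLimit_of_isInvariant (hA ▸ ϕ.isInvariant_omegaLimit_atTop N)
  have h := (mapsTo_omegaLimit A hgA (fun t x => hcomm t x) hg).mono_left hsub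
  rwa [hA] at h

theorem isInvariant_of_commute [CompactSpace X] (hAN : A ⊆ interior N) (hA : ω⁺ ϕ N = A)
    (ψ : Flow ℝ X) (hcomm : ∀ s t x, ψ s (ϕ t x) = ϕ t (ψ s x)) : IsInvariant ψ A := by
  have hAc : IsCompact A := (hA ▸ isClosed_omegaLimit _ _ _ : IsClosed A).isCompact
  obtain ⟨u, v, hu, -, h0u, hAv, huv⟩ := generalized_tube_lemma isCompact_singleton hAc
    (isOpen_interior.preimage ψ.cont') (s := {(0 : ℝ)}) (by
      rintro ⟨_, a⟩ ⟨rfl, ha⟩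
      simpa [Function.uncurry, ψ.map_zero_apply] using hAN ha)
  let M : AddSubmonoid ℝ :=
    { carrier := {s | MapsTo (ψ s) A A}
      add_mem' := fun {s t} hs ht => fun x hx => by
        rw [ψ.map_add]; exact hs (ht hx)
      zero_mem' := by simp [mem_ofPred_eq, ψ.map_zero, mapsTo_id] }
  have hsmall : ∀ s ∈ u, s ∈ M := fun s hs =>
    mapsTo_of_mapsTo_of_semiconj hA (ψ.continuous_toFun s) (fun t x => hcomm s t x)
      fun a ha => interior_subset (huv (mk_mem_prod hs (hAv ha)))
  intro s
  obtain ⟨n, hn, hn1⟩ := (((tendsto_const_div_atTop_nhds_zero_nat s).eventually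
    (hu.mem_nhds (h0u rfl))).and (eventually_ge_atTop 1)).exists
  have hs : n • (s / n) = s := by
    rw [nsmul_eq_mul, mul_div_cancel₀ _ (by positivity)]
  exact hs ▸ M.nsmul_mem (hsmall _ hn) n

theorem omegaLimit_inter_nonempty_of_mem_interior [CompactSpace X] (hAN : A ⊆ interior N)
    (hA : ω⁺ ϕ N = A) {ψ : Flow ℝ X} (hcomm : ∀ s t x, ψ s (ϕ t x) = ϕ t (ψ s x))
    {x : X} {s : ℝ} (hx : ψ s x ∈ interior N) : (ω⁺ ϕ {x} ∩ A).Nonempty := by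
  obtain ⟨b, hb⟩ := nonempty_omegaLimit atTop ϕ _ (singleton_nonempty (ψ s x))
  have hbA : b ∈ A := hA ▸ omegaLimit_mono_right _ _
    (singleton_subset_iff.2 (interior_subset hx)) hb
  have hback : MapsTo (ψ (-s)) {ψ s x} {x} := by
    rintro _ rfl
    rw [← ψ.map_add, neg_add_cancel, ψ.map_zero_apply, mem_singleton_iff]
  exact ⟨ψ (-s) b, mapsTo_omegaLimit _ hback (fun t y => hcomm (-s) t y)
    (ψ.continuous_toFun _) hb, isInvariant_of_commute hAN hA ψ hcomm (-s) hbA⟩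

theorem eq_univ_of_forall_omegaLimit_inter_nonempty [CompactSpace X] (hAN : A ⊆ interior N)
    (hA : ω⁺ ϕ N = A) (h : ∀ x, (ω⁺ ϕ {x} ∩ A).Nonempty) : A = univ := by
  refine eq_univ_of_forall fun x => ?_
  obtain ⟨p, hp⟩ := nonempty_omegaLimit atBot ϕ _ (singleton_nonempty x)
  obtain ⟨a, haω, haA⟩ := h p
  obtain ⟨t, hpt⟩ : ∃ t, ϕ t p ∈ interior N := by
    simpa using ((mem_omegaLimit_iff_frequently _ _ _ a).1 haω _
      (isOpen_interior.mem_nhds (hAN haA))).exists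
  have hq : ϕ t p ∈ ω⁻ ϕ {x} := ϕ.isInvariant_omegaLimit_atBot {x} t hp
  have hpast : ∃ᶠ s in atBot, ϕ s x ∈ interior N := by
    simpa using (mem_omegaLimit_iff_frequently _ _ _ _).1 hq _
      (isOpen_interior.mem_nhds hpt)
  have hfuture : ∃ᶠ t in atTop, ϕ (-t) x ∈ interior N :=
    tendsto_neg_atBot_atTop.frequently (by simpa using hpast)
  rw [← hA, mem_omegaLimit_iff_frequently]
  refine fun n hn => hfuture.mono fun t ht => ⟨ϕ (-t) x, interior_subset ht, ?_⟩
  rw [mem_preimage, ← ϕ.map_add, add_neg_cancel, ϕ.map_zero_apply]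
  exact mem_of_mem_nhds hn

end Attractor

theorem NormedSpace.exp_smul_one {𝔸 : Type*} [NormedRing 𝔸] [NormedAlgebra ℝ 𝔸]
    [CompleteSpace 𝔸] (s : ℝ) : NormedSpace.exp (s • (1 : 𝔸)) = Real.exp s • 1 := by
  rw [← Algebra.algebraMap_eq_smul_one, ← Algebra.algebraMap_eq_smul_one,
    ← NormedSpace.algebraMap_exp_comm, Real.exp_eq_exp_ℝ]

section LinearFlow

open NormedSpace OnePoint

variable {V : Type*} [NormedAddCommGroup V] [NormedSpace ℝ V]

-- `exp_add_of_commute` and `exp_continuous` are stated for normed `ℚ`-algebras.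
noncomputable local instance : NormedAlgebra ℚ (V →L[ℝ] V) :=
  NormedAlgebra.restrictScalars ℚ ℝ _

@[simp] theorem expFlow_coe (D : V →L[ℝ] V) (v : V) (t : ℝ) :
    expFlow D v t = (exp (t • D) v : V) := rfl

section Complete

variable [CompleteSpace V]

theorem exp_add_smul (D : V →L[ℝ] V) (s t : ℝ) :
    exp ((s + t) • D) = exp (s • D) * exp (t • D) := by
  rw [add_smul]
  exact exp_add_of_commute (((Commute.refl D).smul_left s).smul_right t)

theorem exp_smul_apply_eq_of_hasDerivAt (D : V →L[ℝ] V) {c : ℝ → V}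
    (hc : ∀ t, HasDerivAt c (D (c t)) t) (t : ℝ) : exp (t • D) (c 0) = c t := by
  have hderiv (s : ℝ) : HasDerivAt (fun s => exp (s • -D) (c s)) 0 s := by
    simpa [mul_apply_eq_comp] using (hasDerivAt_exp_smul_const (-D) s).clm_apply (hc s)
  have hconst := is_const_of_deriv_eq_zero (fun s => (hderiv s).differentiableAt)
    (fun s => (hderiv s).deriv) 0 t
  rw [zero_smul, exp_zero, one_apply_eq_self] at hconst
  have hinv : exp (t • D) * exp (t • -D) = 1 := by
    rw [← exp_add_of_commute (((Commute.refl D).neg_right.smul_left t).smul_right t), smul_neg,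
      add_neg_cancel, exp_zero]
  rw [hconst, ← mul_apply_eq_comp, hinv, one_apply_eq_self]

theorem exists_pos_exp_smul_apply_eq_self (D : V →L[ℝ] V) {τ : ℝ} (hτ : τ ≠ 0)
    {v₁ v₂ : V} (h1 : D v₁ = (-τ) • v₂) (h2 : D v₂ = τ • v₁) :
    ∃ T : ℝ, 0 < T ∧ exp (T • D) v₁ = v₁ := by
  set c : ℝ → V := fun t => Real.cos (τ * t) • v₁ - Real.sin (τ * t) • v₂
  have hc (t : ℝ) : HasDerivAt c (D (c t)) t := by
    have hτt : HasDerivAt (fun t => τ * t) τ t := by simpa using (hasDerivAt_id t).const_mul τ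
    refine ((hτt.cos.smul_const v₁).sub (hτt.sin.smul_const v₂)).congr_deriv ?_
    simp only [c, map_sub, _root_.map_smul, h1, h2, smul_smul]
    module
  refine ⟨2 * Real.pi / |τ|, by positivity, ?_⟩
  have hc0 : c 0 = v₁ := by simp [c]
  have hperiod : τ * (2 * Real.pi / |τ|) = 2 * Real.pi ∨
      τ * (2 * Real.pi / |τ|) = -(2 * Real.pi) := by
    rcases abs_cases τ with ⟨h, -⟩ | ⟨h, -⟩ <;> [left; right] <;> (rw [h]; field_simp)
  rw [← hc0, exp_smul_apply_eq_of_hasDerivAt D hc, hc0]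
  rcases hperiod with h | h <;> simp [c, h]

end Complete

section Proper

variable [ProperSpace V]

theorem tendsto_exp_smul_apply_cocompact (D : V →L[ℝ] V) (t : ℝ) :
    Tendsto (fun p : ℝ × V => exp (p.1 • D) p.2) (𝓝 t ×ˢ cocompact V) (cocompact V) := by
  set M := ‖exp ((-t) • D)‖ + 1
  have hM : 0 < M := by positivity
  have hcont : Continuous fun s : ℝ => ‖exp ((-s) • D)‖ :=
    (exp_continuous.comp (continuous_neg.smul continuous_const)).norm
  have hbound : ∀ᶠ p : ℝ × V in 𝓝 t ×ˢ cocompact V, ‖exp ((-p.1) • D)‖ ≤ M :=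
    tendsto_fst.eventually ((hcont.tendsto t).eventually (ge_mem_nhds (lt_add_one _)))
  refine (tendsto_norm_atTop_iff_cobounded.1 ?_).mono_right Metric.cobounded_eq_cocompact.le
  refine tendsto_atTop_mono' _ (hbound.mono fun p hp => ?_)
    (((tendsto_norm_cocompact_atTop.comp tendsto_snd).atTop_div_const hM))
  rw [Function.comp_apply, div_le_iff₀' hM]
  calc ‖p.2‖ = ‖exp ((-p.1) • D) (exp (p.1 • D) p.2)‖ := by
        rw [← mul_apply_eq_comp, ← exp_add_smul, neg_add_cancel, zero_smul,
          exp_zero, one_apply_eq_self]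
    _ ≤ M * ‖exp (p.1 • D) p.2‖ := (ContinuousLinearMap.le_opNorm _ _).trans
        (mul_le_mul_of_nonneg_right hp (norm_nonneg _))

theorem continuous_uncurry_expFlow (D : V →L[ℝ] V) :
    Continuous fun p : ℝ × OnePoint V => expFlow D p.2 p.1 := by
  have hfin : Continuous fun p : ℝ × V => exp (p.1 • D) p.2 :=
    (exp_continuous.comp (continuous_fst.smul continuous_const)).clm_apply continuous_snd
  refine continuous_iff_continuousAt.2 fun ⟨t, x⟩ => ?_
  induction x with
  | infty =>
    rw [ContinuousAt, nhds_prod_eq, nhds_infty_eq, prod_sup, tendsto_sup, prod_map_right,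
      prod_pure, tendsto_map'_iff, tendsto_map'_iff]
    refine ⟨?_, tendsto_const_nhds⟩
    exact tendsto_coe_infty.comp (coclosedCompact_eq_cocompact (X := V) ▸
      tendsto_exp_smul_apply_cocompact D t)
  | coe v =>
    exact (IsOpenEmbedding.id.prodMap isOpenEmbedding_coe).continuousAt_iff (x := (t, v)) |>.1
      (continuous_coe.comp hfin).continuousAt

noncomputable def linearFlow (D : V →L[ℝ] V) : Flow ℝ (OnePoint V) where
  toFun t x := expFlow D x t
  cont' := continuous_uncurry_expFlow D
  map_add' s t x := by
    induction x with
    | infty => rfl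
    | coe v => simp only [expFlow_coe, exp_add_smul, mul_apply_eq_comp]
  map_zero' x := by
    induction x with
    | infty => rfl
    | coe v => simp only [expFlow_coe, zero_smul, exp_zero, one_apply_eq_self]

theorem linearFlow_apply (D : V →L[ℝ] V) (t : ℝ) (x : OnePoint V) :
    linearFlow D t x = expFlow D x t := rfl

theorem omegaSet_expFlow (D : V →L[ℝ] V) (S : Set (OnePoint V)) :
    omegaSet (expFlow D) S = ω⁺ (linearFlow D) S :=
  omegaSet_eq_omegaLimit _ S

theorem linearFlow_commute {D E : V →L[ℝ] V} (h : Commute D E) (s t : ℝ) (x : OnePoint V) :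
    linearFlow E s (linearFlow D t x) = linearFlow D t (linearFlow E s x) := by
  induction x with
  | infty => rfl
  | coe v =>
    simp only [linearFlow_apply, expFlow_coe, ← mul_apply_eq_comp,
      (((h.smul_left t).smul_right s).exp).eq]

theorem linearFlow_one_coe (s : ℝ) (w : V) :
    linearFlow 1 s (w : OnePoint V) = (Real.exp s • w : V) := by
  rw [linearFlow_apply, expFlow_coe, exp_smul_one, smul_apply, one_apply_eq_self]

theorem tendsto_linearFlow_one_atBot (w : V) :
    Tendsto (fun s => linearFlow 1 s (w : OnePoint V)) atBot (𝓝 ((0 : V) : OnePoint V)) := by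
  have h := Real.tendsto_exp_atBot.smul_const w
  rw [zero_smul] at h
  simpa only [linearFlow_one_coe, Function.comp_def] using (continuous_coe.tendsto 0).comp h

theorem tendsto_linearFlow_one_atTop {w : V} (hw : w ≠ 0) :
    Tendsto (fun s => linearFlow 1 s (w : OnePoint V)) atTop (𝓝 ∞) := by
  simp only [linearFlow_one_coe]
  refine tendsto_coe_infty.comp ?_
  rw [coclosedCompact_eq_cocompact, ← Metric.cobounded_eq_cocompact,
    ← tendsto_norm_atTop_iff_cobounded]
  simp only [norm_smul, Real.norm_eq_abs, Real.abs_exp]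
  exact Real.tendsto_exp_atTop.atTop_mul_const (norm_pos_iff.2 hw)

end Proper

end LinearFlow

section LinearAttractor

open NormedSpace OnePoint

variable {V : Type*} [NormedAddCommGroup V] [NormedSpace ℝ V] [ProperSpace V]

theorem coe_zero_mem_and_infty_mem {A : Set (OnePoint V)} (hAc : IsClosed A)
    (hA : IsInvariant (linearFlow 1) A) {w : V} (hw : w ≠ 0) (hwA : (w : OnePoint V) ∈ A) :
    ((0 : V) : OnePoint V) ∈ A ∧ ∞ ∈ A :=
  ⟨hAc.mem_of_tendsto (tendsto_linearFlow_one_atBot w) (Eventually.of_forall fun s => hA s hwA),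
    hAc.mem_of_tendsto (tendsto_linearFlow_one_atTop hw) (Eventually.of_forall fun s => hA s hwA)⟩

variable {D : V →L[ℝ] V} {A N : Set (OnePoint V)}

theorem coe_zero_mem_and_infty_mem_of_periodic (hAN : A ⊆ interior N)
    (hA : ω⁺ (linearFlow D) N = A) (hne : A.Nonempty) {v : V} (hv : v ≠ 0) {T : ℝ}
    (hT : 0 < T) (hper : exp (T • D) v = v) : ((0 : V) : OnePoint V) ∈ A ∧ ∞ ∈ A := by
  have hAc : IsClosed A := hA ▸ isClosed_omegaLimit _ _ _
  have hscale : IsInvariant (linearFlow 1) A :=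
    isInvariant_of_commute hAN hA _ (linearFlow_commute (Commute.one_right D))
  obtain ⟨s, hs⟩ : ∃ s, linearFlow 1 s (v : OnePoint V) ∈ interior N := by
    obtain ⟨a, ha⟩ := hne
    induction a with
    | infty =>
      exact ((tendsto_linearFlow_one_atTop hv).eventually
        (isOpen_interior.mem_nhds (hAN ha))).exists
    | coe w =>
      have h0 := hAc.mem_of_tendsto (tendsto_linearFlow_one_atBot w)
        (Eventually.of_forall fun s => hscale s ha)
      exact ((tendsto_linearFlow_one_atBot v).eventually
        (isOpen_interior.mem_nhds (hAN h0))).exists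
  have hperiodic : linearFlow D T (linearFlow 1 s (v : OnePoint V)) = linearFlow 1 s v := by
    rw [← linearFlow_commute (Commute.one_right D)]
    simp [linearFlow_apply, hper]
  have hsA := hA ▸ (linearFlow D).mem_omegaLimit_of_periodic (interior_subset hs) hT hperiodic
  rw [linearFlow_one_coe] at hsA
  exact coe_zero_mem_and_infty_mem hAc hscale (smul_ne_zero (Real.exp_ne_zero s) hv) hsA

theorem eq_univ_of_periodic (hAN : A ⊆ interior N) (hA : ω⁺ (linearFlow D) N = A)
    (hne : A.Nonempty) {v : V} (hv : v ≠ 0) {T : ℝ} (hT : 0 < T) (hper : exp (T • D) v = v) :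
    A = univ := by
  obtain ⟨h0, hinf⟩ := coe_zero_mem_and_infty_mem_of_periodic hAN hA hne hv hT hper
  have hcomm := linearFlow_commute (Commute.one_right D)
  refine eq_univ_of_forall_omegaLimit_inter_nonempty hAN hA fun x => ?_
  induction x with
  | infty =>
    exact omegaLimit_inter_nonempty_of_mem_interior hAN hA hcomm (s := 0)
      (by rw [Flow.map_zero_apply]; exact hAN hinf)
  | coe w =>
    obtain ⟨s, hs⟩ := ((tendsto_linearFlow_one_atBot w).eventually
      (isOpen_interior.mem_nhds (hAN h0))).exists
    exact omegaLimit_inter_nonempty_of_mem_interior hAN hA hcomm hs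

end LinearAttractor

/-- if the flow `α_D` on the one-point compactification of a
finite-dimensional real normed space `V` has a nontrivial attractor-repeller pair,
then `D` has no nonzero purely imaginary eigenvalue. -/
theorem stmt_10 {V : Type*} [NormedAddCommGroup V] [NormedSpace ℝ V]
    [FiniteDimensional ℝ V] (D : V →L[ℝ] V)
    (hpair : ∃ A : Set (OnePoint V), IsAttractorFor (expFlow D) A ∧
      A ∪ compRepeller (expFlow D) A ≠ Set.univ) :
    ¬∃ (τ : ℝ) (v₁ v₂ : V), τ ≠ 0 ∧ (v₁ ≠ 0 ∨ v₂ ≠ 0) ∧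
      D v₁ = (-τ) • v₂ ∧ D v₂ = τ • v₁ := by
  rintro ⟨τ, v₁, v₂, hτ, hv, h1, h2⟩
  obtain ⟨A, ⟨N, hAN, hA⟩, hnontrivial⟩ := hpair
  obtain ⟨x, hx⟩ := (ne_univ_iff_exists_notMem _).1 hnontrivial
  have hv₁ : v₁ ≠ 0 := by
    rintro rfl
    rw [map_zero, eq_comm, smul_eq_zero, neg_eq_zero] at h1
    exact hv.elim (· rfl) fun h => h (h1.resolve_left hτ)
  have hne : A.Nonempty := by
    by_contra h
    exact hx (Or.inr (by simp [compRepeller, not_nonempty_iff_eq_empty.1 h]))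
  obtain ⟨T, hT, hper⟩ := exists_pos_exp_smul_apply_eq_self D hτ h1 h2
  rw [omegaSet_expFlow] at hA
  exact hx (Or.inl (eq_univ_of_periodic hAN hA hne hv₁ hT hper ▸ mem_univ x))
end

section
/- Let V be a finite-dimensional real inner product space, and let S, N be commuting linear endomorphisms of V such that exp(tS) is an isometry of V for every t ∈ ℝ and N is nilpotent, with N^k = 0 for some integer k ≥ 2. If v ∈ V satisfies N^{k−1}v ≠ 0, then ‖exp(t(S+N))v‖ → ∞ both as t → ∞ and as t → −∞. -/
/-!
Since `S` and `N` commute, `exp (t • (S + N)) = exp (t • S) * exp (t • N)`, and the first factor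
is an isometry, so only `‖exp (t • N) v‖` matters. As `N` is nilpotent, `exp (t • N) v` is the
vector-valued polynomial `∑ n < k, tⁿ • (n!⁻¹ • Nⁿ v)`, whose coefficient of `t^(k-1)` is nonzero.
A norm-one functional that does not vanish on that coefficient turns it into a real polynomial
of positive degree; its absolute value bounds the norm from below and tends to infinity
at both ends of `ℝ`.
-/

open Filter Finset Nat
open scoped Polynomial

theorem NormedSpace.exp_eq_sum_of_pow_eq_zero (𝕂 : Type*) {𝔸 : Type*} [Field 𝕂] [CharZero 𝕂]
    [Ring 𝔸] [Algebra 𝕂 𝔸] [TopologicalSpace 𝔸] [IsTopologicalRing 𝔸]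
    {x : 𝔸} {k : ℕ} (hx : x ^ k = 0) :
    NormedSpace.exp x = ∑ n ∈ range k, (n !⁻¹ : 𝕂) • x ^ n := by
  rw [NormedSpace.exp_eq_tsum 𝕂]
  refine tsum_eq_sum fun n hn => ?_
  rw [pow_eq_zero_of_le (not_lt.mp (mem_range.not.mp hn)) hx, smul_zero]

theorem exp_smul_apply_eq_sum_of_pow_eq_zero {V : Type*} [NormedAddCommGroup V] [NormedSpace ℝ V]
    {N : V →L[ℝ] V} {k : ℕ} (hN : N ^ k = 0) (t : ℝ) (v : V) :
    NormedSpace.exp (t • N) v = ∑ n ∈ range k, t ^ n • (n !⁻¹ : ℝ) • (N ^ n) v := by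
  rw [NormedSpace.exp_eq_sum_of_pow_eq_zero ℝ (by rw [smul_pow, hN, smul_zero]), _root_.sum_apply]
  refine sum_congr rfl fun n _ => ?_
  rw [smul_pow, _root_.smul_apply, _root_.smul_apply, smul_comm]

theorem norm_exp_smul_add_apply_of_isometry {V : Type*} [NormedAddCommGroup V] [NormedSpace ℝ V]
    [CompleteSpace V] {S N : V →L[ℝ] V} (hSN : Commute S N) {t : ℝ}
    (hS : Isometry ⇑(NormedSpace.exp (t • S))) (v : V) :
    ‖NormedSpace.exp (t • (S + N)) v‖ = ‖NormedSpace.exp (t • N) v‖ := by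
  have hball (x : V →L[ℝ] V) : x ∈ Metric.eball 0 (NormedSpace.expSeries ℝ (V →L[ℝ] V)).radius :=
    (NormedSpace.expSeries_radius_eq_top ℝ (V →L[ℝ] V)).symm ▸ edist_lt_top _ _
  rw [smul_add, NormedSpace.exp_add_of_commute_of_mem_ball ((hSN.smul_left t).smul_right t)
    (hball _) (hball _)]
  exact hS.norm_map_of_map_zero (map_zero _) _

theorem tendsto_norm_sum_pow_smul_cocompact {E : Type*} [NormedAddCommGroup E] [NormedSpace ℝ E]
    (a : ℕ → E) {m k : ℕ} (hmk : m < k) (hm : 0 < m) (ha : a m ≠ 0) :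
    Tendsto (fun t : ℝ => ‖∑ n ∈ range k, t ^ n • a n‖) (cocompact ℝ) atTop := by
  obtain ⟨g, hg, hgam⟩ := exists_dual_vector ℝ (a m) (norm_ne_zero_iff.mpr ha)
  set p : ℝ[X] := ∑ n ∈ range k, Polynomial.monomial n (g (a n))
  have hp_eval (t : ℝ) : p.eval t = g (∑ n ∈ range k, t ^ n • a n) := by
    simp [p, Polynomial.eval_finsetSum, mul_comm]
  have hp_coeff : p.coeff m = ‖a m‖ := by
    simp [p, Polynomial.coeff_monomial, hmk, hgam]
  have hp_deg : 0 < p.degree :=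
    (WithBot.coe_lt_coe.mpr hm).trans_le
      (Polynomial.le_degree_of_ne_zero (by rw [hp_coeff]; exact norm_ne_zero_iff.mpr ha))
  refine tendsto_atTop_mono (fun t => ?_)
    (p.tendsto_norm_atTop hp_deg (z := id) tendsto_norm_cocompact_atTop)
  calc ‖p.eval t‖ = ‖g (∑ n ∈ range k, t ^ n • a n)‖ := by rw [hp_eval]
    _ ≤ ‖∑ n ∈ range k, t ^ n • a n‖ := by
      simpa [hg] using g.le_opNorm (∑ n ∈ range k, t ^ n • a n)

/-- let `V` be a finite-dimensional real inner product space and `S, N`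
commuting endomorphisms of `V` with `exp(tS)` an isometry for all `t ∈ ℝ` and `N`
nilpotent, `N^k = 0` for some `k ≥ 2`. If `N^{k−1}v ≠ 0`, then
`‖exp(t(S+N))v‖ → ∞` both as `t → ∞` and as `t → −∞`. -/
theorem stmt_11 {V : Type*} [NormedAddCommGroup V] [InnerProductSpace ℝ V]
    [FiniteDimensional ℝ V]
    (S N : V →L[ℝ] V) (hcomm : S ∘L N = N ∘L S)
    (hiso : ∀ t : ℝ, Isometry ⇑(NormedSpace.exp (t • S)))
    (k : ℕ) (hk : 2 ≤ k) (hNk : N ^ k = 0)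
    (v : V) (hv : (N ^ (k - 1)) v ≠ 0) :
    Tendsto (fun t : ℝ => ‖NormedSpace.exp (t • (S + N)) v‖) atTop atTop ∧
    Tendsto (fun t : ℝ => ‖NormedSpace.exp (t • (S + N)) v‖) atBot atTop := by
  have h_cocompact :
      Tendsto (fun t : ℝ => ‖NormedSpace.exp (t • (S + N)) v‖) (cocompact ℝ) atTop := by
    simp_rw [norm_exp_smul_add_apply_of_isometry hcomm (hiso _),
      exp_smul_apply_eq_sum_of_pow_eq_zero hNk]
    exact tendsto_norm_sum_pow_smul_cocompact _ (m := k - 1) (by omega) (by omega)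
      (smul_ne_zero (by positivity) hv)
  exact ⟨h_cocompact.mono_left atTop_le_cocompact, h_cocompact.mono_left atBot_le_cocompact⟩
end

section
/- Let V be a finite-dimensional real normed vector space and D a linear endomorphism of V such that Re z < 0 for every eigenvalue z ∈ ℂ of the complexification of D. Then for every v ∈ V one has exp(tD)v → 0 as t → ∞. -/
/-!
Over `ℂ` the space splits into generalized eigenspaces of the complexified operator `A`. On the
one for `μ`, `A - μ` is nilpotent, so `exp (t A) x = e^{tμ} ∑_{m<k} t^m/m! (A - μ)^m x`, a
polynomial times `e^{tμ}`, which tends to `0` when `Re μ < 0`. Coordinates in a basis embed `V`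
topologically into its complexification `ι → ℂ`, intertwining `exp (t D)` with `exp (t A)`.
-/

open Filter Topology NormedSpace Module Module.End

theorem Complex.tendsto_exp_mul_mul_pow_atTop_nhds_zero {μ : ℂ} (hμ : μ.re < 0) (m : ℕ) :
    Tendsto (fun t : ℝ => Complex.exp (t * μ) * (t : ℂ) ^ m) atTop (𝓝 0) := by
  rw [tendsto_zero_iff_norm_tendsto_zero]
  refine (tendsto_rpow_mul_exp_neg_mul_atTop_nhds_zero m (-μ.re) (neg_pos.mpr hμ)).congr' ?_
  filter_upwards [eventually_ge_atTop (0 : ℝ)] with t ht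
  simp [Complex.norm_exp, abs_of_nonneg ht, mul_comm]

theorem exp_algebraMap_add {𝕂 𝔸 : Type*} [RCLike 𝕂] [NormedRing 𝔸] [NormedAlgebra 𝕂 𝔸]
    [CompleteSpace 𝔸] (z : 𝕂) (a : 𝔸) : exp (algebraMap 𝕂 𝔸 z + a) = exp z • exp a := by
  have hball (b : 𝔸) : b ∈ Metric.eball (0 : 𝔸) (expSeries 𝕂 𝔸).radius := by
    simp [expSeries_radius_eq_top]
  rw [exp_add_of_commute_of_mem_ball (Algebra.commutes z a) (hball _) (hball _),
    ← algebraMap_exp_comm, Algebra.smul_def]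

section RCLike

variable {𝕂 E : Type*} [RCLike 𝕂] [NormedAddCommGroup E] [NormedSpace 𝕂 E] [CompleteSpace E]

theorem exp_apply_eq_sum_of_pow_apply_eq_zero {N : E →L[𝕂] E} {k : ℕ} {x : E}
    (hx : (N ^ k) x = 0) :
    exp N x = ∑ m ∈ Finset.range k, (m.factorial⁻¹ : 𝕂) • (N ^ m) x := by
  have hsum := (exp_series_hasSum_exp' (𝕂 := 𝕂) N).mapL (ContinuousLinearMap.apply 𝕂 E x)
  refine hsum.unique (hasSum_sum_of_ne_finset_zero fun m hm => ?_)
  obtain ⟨j, rfl⟩ := Nat.exists_eq_add_of_le (not_lt.mp (Finset.mem_range.not.mp hm))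
  rw [ContinuousLinearMap.apply_apply, add_comm, pow_add, smul_apply, mul_apply_eq_comp, hx,
    map_zero, smul_zero]

theorem exp_smul_apply_eq_sum {A : E →L[𝕂] E} {μ : 𝕂} {k : ℕ} {x : E}
    (hx : ((A - μ • 1) ^ k) x = 0) (t : 𝕂) :
    exp (t • A) x = ∑ m ∈ Finset.range k,
      (exp (t * μ) * t ^ m / m.factorial) • ((A - μ • 1) ^ m) x := by
  have hsplit : t • A = algebraMap 𝕂 (E →L[𝕂] E) (t * μ) + t • (A - μ • 1) := by
    rw [Algebra.algebraMap_eq_smul_one, smul_sub, smul_smul]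
    abel
  have hnil : ((t • (A - μ • 1)) ^ k) x = 0 := by
    rw [smul_pow, smul_apply, hx, smul_zero]
  rw [hsplit, exp_algebraMap_add, smul_apply, exp_apply_eq_sum_of_pow_apply_eq_zero hnil,
    Finset.smul_sum]
  refine Finset.sum_congr rfl fun m _ => ?_
  rw [smul_pow, smul_apply, smul_smul, smul_smul]
  congr 1
  field_simp

end RCLike

theorem Module.End.hasEigenvalue_of_mem_maxGenEigenspace {K M : Type*} [CommRing K]
    [AddCommGroup M] [Module K M] {f : End K M} {μ : K} {x : M}
    (hx : x ∈ f.maxGenEigenspace μ) (hx0 : x ≠ 0) : f.HasEigenvalue μ := by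
  have hμ : f.HasUnifEigenvalue μ ⊤ := fun h => hx0 (by rwa [maxGenEigenspace, h] at hx)
  exact hμ.lt zero_lt_one

section Complex

variable {E : Type*} [NormedAddCommGroup E] [NormedSpace ℂ E]

theorem tendsto_exp_smul_apply_of_mem_maxGenEigenspace [CompleteSpace E] (A : E →L[ℂ] E)
    {μ : ℂ} (hμ : μ.re < 0) {x : E} (hx : x ∈ maxGenEigenspace (A : End ℂ E) μ) :
    Tendsto (fun t : ℝ => exp ((t : ℂ) • A) x) atTop (𝓝 0) := by
  obtain ⟨k, hk⟩ := (mem_maxGenEigenspace _ _ _).mp hx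
  have hk' : ((A - μ • 1) ^ k) x = 0 := by
    rwa [← ContinuousLinearMap.coe_coe, ContinuousLinearMap.toLinearMap_pow,
      ContinuousLinearMap.toLinearMap_sub, ContinuousLinearMap.toLinearMap_smul,
      ContinuousLinearMap.toLinearMap_one]
  simp_rw [exp_smul_apply_eq_sum hk', ← Complex.exp_eq_exp_ℂ]
  rw [← Finset.sum_const_zero (s := Finset.range k)]
  refine tendsto_finsetSum _ fun m _ => ?_
  rw [← zero_smul ℂ (((A - μ • 1) ^ m) x)]
  refine Tendsto.smul_const ?_ _
  simpa using (Complex.tendsto_exp_mul_mul_pow_atTop_nhds_zero hμ m).div_const (m.factorial : ℂ)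

theorem tendsto_exp_smul_apply_of_forall_re_lt_zero [FiniteDimensional ℂ E] (A : E →L[ℂ] E)
    (hA : ∀ μ : ℂ, HasEigenvalue (A : End ℂ E) μ → μ.re < 0) (x : E) :
    Tendsto (fun t : ℝ => exp ((t : ℂ) • A) x) atTop (𝓝 0) := by
  have hx : x ∈ ⨆ μ, maxGenEigenspace (A : End ℂ E) μ := by
    rw [iSup_maxGenEigenspace_eq_top]
    trivial
  induction hx using Submodule.iSup_induction' with
  | mem μ y hy =>
    rcases eq_or_ne y 0 with rfl | hy0
    · simp
    · exact tendsto_exp_smul_apply_of_mem_maxGenEigenspace A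
        (hA μ (hasEigenvalue_of_mem_maxGenEigenspace hy hy0)) hy
  | zero => simp
  | add y z _ _ hy hz => simpa using hy.add hz

end Complex

theorem exp_apply_of_semiconj {V E : Type*} [NormedAddCommGroup V] [NormedSpace ℝ V]
    [CompleteSpace V] [NormedAddCommGroup E] [NormedSpace ℂ E] [CompleteSpace E]
    {D : V →L[ℝ] V} {A : E →L[ℂ] E} {c : V →L[ℝ] E} (hc : Function.Semiconj c D A) (v : V) :
    exp A (c v) = c (exp D v) := by
  have hA := (exp_series_hasSum_exp' (𝕂 := ℂ) A).mapL (ContinuousLinearMap.apply ℂ E (c v))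
  have hD := (exp_series_hasSum_exp' (𝕂 := ℝ) D).mapL (c.comp (ContinuousLinearMap.apply ℝ V v))
  refine hA.unique (hD.congr_fun fun m => ?_)
  simp [← (hc.iterate_right m) v, inv_natCast_smul_eq ℂ ℝ]

section Coordinates

variable {ι V : Type*} [NormedAddCommGroup V] [NormedSpace ℝ V] [FiniteDimensional ℝ V]
  (b : Basis ι ℝ V)

noncomputable def Module.Basis.complexCoord : V →L[ℝ] (ι → ℂ) :=
  LinearMap.toContinuousLinearMap (LinearMap.pi fun i => Complex.ofRealLI.toLinearMap ∘ₗ b.coord i)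

theorem Module.Basis.complexCoord_apply (v : V) (i : ι) : b.complexCoord v i = b.repr v i := rfl

theorem Module.Basis.isEmbedding_complexCoord : IsEmbedding b.complexCoord := by
  refine (LinearMap.isClosedEmbedding_of_injective (f := (b.complexCoord : V →ₗ[ℝ] ι → ℂ))
    (LinearMap.ker_eq_bot.mpr fun v w h => b.repr.injective ?_)).isEmbedding
  ext i
  exact Complex.ofReal_injective (congr_fun h i)

variable [Fintype ι] [DecidableEq ι] (D : V →L[ℝ] V)

/-- The complexification of `D` in the coordinates of `b`, acting on `ι → ℂ ≅ ℂ ⊗[ℝ] V`. -/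
noncomputable def ContinuousLinearMap.complexifyInBasis : (ι → ℂ) →L[ℂ] (ι → ℂ) :=
  LinearMap.toContinuousLinearMap
    ((LinearMap.toMatrix b b (D : V →ₗ[ℝ] V)).map (algebraMap ℝ ℂ)).toLin'

theorem ContinuousLinearMap.semiconj_complexCoord_complexifyInBasis :
    Function.Semiconj b.complexCoord D (D.complexifyInBasis b) := by
  intro v
  ext i
  simp only [complexifyInBasis, LinearMap.coe_toContinuousLinearMap', Matrix.toLin'_apply]
  rw [Module.Basis.complexCoord_apply, ← ContinuousLinearMap.coe_coe,
    ← LinearMap.toMatrix_mulVec_repr b b]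
  exact RingHom.map_mulVec (algebraMap ℝ ℂ) _ _ i

theorem ContinuousLinearMap.hasEigenvalue_complexifyInBasis_iff {μ : ℂ} :
    HasEigenvalue (D.complexifyInBasis b : End ℂ (ι → ℂ)) μ ↔
      HasEigenvalue ((D : V →ₗ[ℝ] V).baseChange ℂ) μ := by
  rw [hasEigenvalue_iff_mem_spectrum, hasEigenvalue_iff_mem_spectrum,
    ← LinearMap.spectrum_toMatrix _ (Algebra.TensorProduct.basis ℂ b),
    LinearMap.toMatrix_baseChange, complexifyInBasis, LinearMap.coe_toContinuousLinearMap,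
    Matrix.spectrum_toLin']

end Coordinates

/-- if every eigenvalue of the complexification of an endomorphism `D`
of a finite-dimensional real normed space `V` has negative real part, then
`exp(tD)v → 0` as `t → ∞`, for every `v ∈ V`. -/
theorem stmt_14 {V : Type*} [NormedAddCommGroup V] [NormedSpace ℝ V]
    [FiniteDimensional ℝ V] (D : V →L[ℝ] V)
    (heig : ∀ z : ℂ, Module.End.HasEigenvalue
      (LinearMap.baseChange ℂ (D : V →ₗ[ℝ] V)) z → z.re < 0)
    (v : V) :
    Tendsto (fun t : ℝ => NormedSpace.exp (t • D) v) atTop (𝓝 0) := by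
  let b := Module.finBasis ℝ V
  have hsemi (t : ℝ) :
      Function.Semiconj b.complexCoord (t • D) ((t : ℂ) • D.complexifyInBasis b) := fun w => by
    simp [(D.semiconj_complexCoord_complexifyInBasis b).eq w, Complex.coe_smul]
  rw [b.isEmbedding_complexCoord.tendsto_nhds_iff, Function.comp_def, map_zero]
  refine (tendsto_exp_smul_apply_of_forall_re_lt_zero _ (fun μ hμ => heig μ ?_) _).congr
    fun t => exp_apply_of_semiconj (hsemi t) v
  exact (D.hasEigenvalue_complexifyInBasis_iff b).mp hμ
end

section
/- Let V be a finite-dimensional real normed vector space and D a linear endomorphism of V such that Re z > 0 for every eigenvalue z ∈ ℂ of the complexification of D. Then for every v ∈ V with v ≠ 0 one has ‖exp(tD)v‖ → ∞ as t → ∞. -/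
/-!
Complexify: after choosing a basis, `D` becomes a real operator on `ℝⁿ ⊂ ℂⁿ`, intertwined with a
complex operator `T` whose eigenvalues are eigenvalues of `D_ℂ`. On a generalized eigenvector
`x` for `μ`, `exp(tT) x = e^{tμ} ∑_{k<m} tᵏ/k! (T - μ)ᵏ x`, which tends to `0` as `t → -∞`
because `Re μ > 0`. The generalized eigenspaces span `ℂⁿ`, so `exp(tT) → 0` pointwise, hence
in operator norm, as `t → -∞`. Then `‖w‖ ≤ ‖exp(-tT)‖ ‖exp(tT) w‖` forces `‖exp(tT) w‖ → ∞`.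
-/

open Filter Topology NormedSpace Finset Nat

theorem tendsto_cexp_mul_mul_pow_atBot {μ : ℂ} (hμ : 0 < μ.re) (k : ℕ) :
    Tendsto (fun t : ℝ => Complex.exp (t * μ) * (t : ℂ) ^ k) atBot (𝓝 0) := by
  rw [tendsto_zero_iff_norm_tendsto_zero, ← tendsto_comp_neg_atTop_iff]
  refine (tendsto_rpow_mul_exp_neg_mul_atTop_nhds_zero k μ.re hμ).congr' ?_
  filter_upwards [eventually_ge_atTop 0] with s hs
  simp [Complex.norm_exp, abs_of_nonneg hs, mul_comm]

theorem tendsto_atTop_of_le_mul_of_tendsto_zero {α : Type*} {l : Filter α} {a : ℝ} {c f : α → ℝ}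
    (ha : 0 < a) (hc : Tendsto c l (𝓝 0)) (hf : ∀ t, 0 ≤ f t) (h : ∀ t, a ≤ c t * f t) :
    Tendsto f l atTop := by
  have hpos (t : α) : 0 < c t := pos_of_mul_pos_left (ha.trans_le (h t)) (hf t)
  have hc' : Tendsto c l (𝓝[>] 0) := tendsto_nhdsWithin_iff.2 ⟨hc, .of_forall hpos⟩
  refine tendsto_atTop_mono (fun t => ?_) (hc'.inv_tendsto_nhdsGT_zero.const_mul_atTop ha)
  rw [Pi.inv_apply, ← div_eq_mul_inv, div_le_iff₀' (hpos t)]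
  exact h t

section BanachAlgebra

variable {𝔸 : Type*} [NormedRing 𝔸] [NormedAlgebra ℂ 𝔸] [CompleteSpace 𝔸]

-- `exp_add_of_commute` is stated for normed `ℚ`-algebras.
theorem exp_eq_cexp_smul_exp_sub_algebraMap (a : 𝔸) (z : ℂ) :
    exp a = Complex.exp z • exp (a - algebraMap ℂ 𝔸 z) := by
  let _ : NormedAlgebra ℚ 𝔸 := .restrictScalars ℚ ℂ 𝔸
  rw [Complex.exp_eq_exp_ℂ, Algebra.smul_def, algebraMap_exp_comm,
    ← exp_add_of_commute (Algebra.commutes z _), add_sub_cancel]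

theorem exp_neg_mul_exp (a : 𝔸) : exp (-a) * exp a = 1 := by
  let _ : NormedAlgebra ℚ 𝔸 := .restrictScalars ℚ ℂ 𝔸
  rw [← exp_add_of_commute (Commute.refl a).neg_left, neg_add_cancel, exp_zero]

end BanachAlgebra

theorem pow_apply_eq_zero_of_le {R M : Type*} [Semiring R] [AddCommMonoid M] [Module R M]
    [TopologicalSpace M] (N : M →L[R] M) {x : M} {m k : ℕ} (hx : (N ^ m) x = 0) (hk : m ≤ k) :
    (N ^ k) x = 0 := by
  rw [← Nat.sub_add_cancel hk, pow_add, mul_apply_eq_comp, hx, map_zero]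

theorem exp_smul_apply_eq_sum_s15 {𝕜 E : Type*} [RCLike 𝕜] [NormedAddCommGroup E] [NormedSpace 𝕜 E]
    [CompleteSpace E] (N : E →L[𝕜] E) {x : E} {m : ℕ} (hx : (N ^ m) x = 0) (t : 𝕜) :
    exp (t • N) x = ∑ k ∈ range m, (t ^ k / k !) • (N ^ k) x := by
  have hsum := (exp_series_hasSum_exp' (𝕂 := 𝕜) (t • N)).mapL (ContinuousLinearMap.apply 𝕜 E x)
  have hterm (k : ℕ) : ContinuousLinearMap.apply 𝕜 E x ((k ! : 𝕜)⁻¹ • (t • N) ^ k) =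
      (t ^ k / k !) • (N ^ k) x := by
    simp [smul_pow, smul_smul, div_eq_inv_mul]
  simp only [hterm] at hsum
  refine hsum.unique (hasSum_sum_of_ne_finset_zero fun k hk => ?_)
  rw [pow_apply_eq_zero_of_le N hx (by simpa using hk), smul_zero]

theorem ContinuousLinearMap.tendsto_nhds_zero_of_tendsto_apply {𝕜 V F α : Type*}
    [NontriviallyNormedField 𝕜] [CompleteSpace 𝕜] [NormedAddCommGroup V] [NormedSpace 𝕜 V]
    [FiniteDimensional 𝕜 V] [NormedAddCommGroup F] [NormedSpace 𝕜 F] {l : Filter α}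
    {f : α → V →L[𝕜] F} (hf : ∀ x, Tendsto (fun a => f a x) l (𝓝 0)) : Tendsto f l (𝓝 0) := by
  let b := Module.finBasis 𝕜 V
  obtain ⟨C, -, hC⟩ := b.exists_opNorm_le (F := F)
  have hsum : Tendsto (fun a => C * ∑ i, ‖f a (b i)‖) l (𝓝 0) := by
    simpa using (tendsto_finsetSum _ fun i _ => (hf (b i)).norm).const_mul C
  refine squeeze_zero_norm (fun a => hC (by positivity) fun i => ?_) hsum
  exact single_le_sum (f := fun i => ‖f a (b i)‖) (fun _ _ => norm_nonneg _) (mem_univ i)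

theorem Module.End.HasEigenvalue.of_mem_maxGenEigenspace {R M : Type*} [CommRing R]
    [AddCommGroup M] [Module R M] {f : Module.End R M} {μ : R} {x : M}
    (hx : x ∈ f.maxGenEigenspace μ) (hx0 : x ≠ 0) : f.HasEigenvalue μ :=
  (Module.End.hasUnifEigenvalue_iff_hasUnifEigenvalue_one (k := ⊤) (by simp)).mp
    ((Submodule.ne_bot_iff _).mpr ⟨x, hx, hx0⟩)

theorem Module.End.HasEigenvalue.of_conj {R M N : Type*} [CommRing R] [AddCommGroup M]
    [Module R M] [AddCommGroup N] [Module R N] {e : M ≃ₗ[R] N} {f : Module.End R M} {μ : R}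
    (hμ : (e.conj f).HasEigenvalue μ) : f.HasEigenvalue μ := by
  obtain ⟨x, hx, hx0⟩ := hμ.exists_hasEigenvector
  refine Module.End.hasEigenvalue_of_hasEigenvector (x := e.symm x) ⟨?_, by simpa using hx0⟩
  rw [Module.End.mem_eigenspace_iff] at hx ⊢
  apply e.injective
  simpa [LinearEquiv.conj_apply] using hx

section ComplexOperator

variable {E : Type*} [NormedAddCommGroup E] [NormedSpace ℂ E]

theorem tendsto_exp_smul_apply_atBot_of_pow_sub_smul_apply_eq_zero [CompleteSpace E]
    (T : E →L[ℂ] E) {μ : ℂ} (hμ : 0 < μ.re) {x : E} {m : ℕ} (hx : ((T - μ • 1) ^ m) x = 0) :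
    Tendsto (fun t : ℝ => exp (t • T) x) atBot (𝓝 0) := by
  have hexp (t : ℝ) : exp (t • T) x =
      ∑ k ∈ range m, ((Complex.exp (t * μ) * (t : ℂ) ^ k) / k !) • ((T - μ • 1) ^ k) x := by
    have hsplit : t • T - algebraMap ℂ (E →L[ℂ] E) (t * μ) = (t : ℂ) • (T - μ • 1) := by
      rw [Algebra.algebraMap_eq_smul_one, smul_sub, smul_smul, Complex.coe_smul]
    rw [exp_eq_cexp_smul_exp_sub_algebraMap _ (t * μ), hsplit, smul_apply,
      exp_smul_apply_eq_sum_s15 _ hx, smul_sum]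
    simp only [smul_smul, mul_div_assoc]
  simp only [hexp]
  rw [← sum_const_zero (s := range m)]
  refine tendsto_finsetSum _ fun k _ => ?_
  simpa using ((tendsto_cexp_mul_mul_pow_atBot hμ k).div_const (k ! : ℂ)).smul_const
    (((T - μ • 1) ^ k) x)

variable [FiniteDimensional ℂ E] (T : E →L[ℂ] E)

theorem tendsto_exp_smul_apply_atBot
    (hT : ∀ μ, Module.End.HasEigenvalue (T : E →ₗ[ℂ] E) μ → 0 < μ.re) (x : E) :
    Tendsto (fun t : ℝ => exp (t • T) x) atBot (𝓝 0) := by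
  have hx : x ∈ ⨆ μ, Module.End.maxGenEigenspace (T : E →ₗ[ℂ] E) μ := by
    rw [Module.End.iSup_maxGenEigenspace_eq_top]; trivial
  refine Submodule.iSup_induction _ (motive := fun y => Tendsto (fun t : ℝ => exp (t • T) y)
    atBot (𝓝 0)) hx (fun μ y hy => ?_) (by simp) (fun y z hy hz => by simpa using hy.add hz)
  obtain rfl | hy0 := eq_or_ne y 0
  · simp
  obtain ⟨m, hm⟩ := (Module.End.mem_maxGenEigenspace _ _ _).mp hy
  refine tendsto_exp_smul_apply_atBot_of_pow_sub_smul_apply_eq_zero T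
    (hT μ (.of_mem_maxGenEigenspace hy hy0)) (m := m) ?_
  rw [← ContinuousLinearMap.coe_coe, ContinuousLinearMap.toLinearMap_pow]
  simpa using hm

theorem tendsto_exp_smul_atBot
    (hT : ∀ μ, Module.End.HasEigenvalue (T : E →ₗ[ℂ] E) μ → 0 < μ.re) :
    Tendsto (fun t : ℝ => exp (t • T)) atBot (𝓝 0) :=
  ContinuousLinearMap.tendsto_nhds_zero_of_tendsto_apply (tendsto_exp_smul_apply_atBot T hT)

theorem tendsto_norm_exp_smul_apply_atTop
    (hT : ∀ μ, Module.End.HasEigenvalue (T : E →ₗ[ℂ] E) μ → 0 < μ.re) {w : E} (hw : w ≠ 0) :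
    Tendsto (fun t : ℝ => ‖exp (t • T) w‖) atTop atTop := by
  have hdecay : Tendsto (fun t : ℝ => ‖exp ((-t) • T)‖) atTop (𝓝 0) := by
    simpa using ((tendsto_exp_smul_atBot T hT).comp tendsto_neg_atTop_atBot).norm
  refine tendsto_atTop_of_le_mul_of_tendsto_zero (norm_pos_iff.2 hw) hdecay
    (fun _ => norm_nonneg _) fun t => ?_
  calc ‖w‖ = ‖exp ((-t) • T) (exp (t • T) w)‖ := by
        rw [← mul_apply_eq_comp, neg_smul, exp_neg_mul_exp, one_apply_eq_self]
    _ ≤ ‖exp ((-t) • T)‖ * ‖exp (t • T) w‖ := ContinuousLinearMap.le_opNorm _ _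

end ComplexOperator

theorem exp_apply_eq_of_intertwine {V W : Type*} [NormedAddCommGroup V] [NormedSpace ℝ V]
    [CompleteSpace V] [NormedAddCommGroup W] [NormedSpace ℂ W] [CompleteSpace W]
    (ρ : V →L[ℝ] W) (A : V →L[ℝ] V) (B : W →L[ℂ] W) (h : ∀ x, B (ρ x) = ρ (A x)) (x : V) :
    exp B (ρ x) = ρ (exp A x) := by
  have hpow (k : ℕ) (y : V) : (B ^ k) (ρ y) = ρ ((A ^ k) y) := by
    induction k generalizing y with
    | zero => rfl
    | succ k ih => rw [pow_succ, pow_succ, mul_apply_eq_comp, mul_apply_eq_comp, h, ih]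
  have hA := ((exp_series_hasSum_exp' (𝕂 := ℝ) A).mapL (ContinuousLinearMap.apply ℝ V x)).mapL ρ
  have hB := (exp_series_hasSum_exp' (𝕂 := ℂ) B).mapL (ContinuousLinearMap.apply ℂ W (ρ x))
  refine hB.unique (hA.congr_fun fun k => ?_)
  simp [hpow, ← Complex.coe_smul]

/-- `ℂ ⊗[ℝ] V` carries no norm, so it is replaced by `ℂⁿ` through the base change of a basis;
`ρ` is `x ↦ 1 ⊗ x` read in that basis. -/
theorem exists_complex_intertwiner {V : Type*} [AddCommGroup V] [Module ℝ V]
    [FiniteDimensional ℝ V] (D : V →ₗ[ℝ] V) :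
    ∃ (n : ℕ) (T : (Fin n → ℂ) →L[ℂ] (Fin n → ℂ)) (ρ : V →ₗ[ℝ] (Fin n → ℂ)),
      Function.Injective ρ ∧ (∀ x, T (ρ x) = ρ (D x)) ∧
      ∀ μ, Module.End.HasEigenvalue (T : (Fin n → ℂ) →ₗ[ℂ] (Fin n → ℂ)) μ →
        Module.End.HasEigenvalue (D.baseChange ℂ) μ := by
  let b := Module.finBasis ℝ V
  let g := (b.baseChange ℂ).equivFun
  refine ⟨_, LinearMap.toContinuousLinearMap (g.conj (D.baseChange ℂ)),
    (g.toLinearMap.restrictScalars ℝ) ∘ₗ TensorProduct.mk ℝ ℂ V 1, fun x y hxy => ?_,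
    fun x => ?_, fun μ hμ => .of_conj (e := g) hμ⟩
  · refine b.repr.injective (Finsupp.ext fun i => ?_)
    simpa [g, Module.Basis.baseChange_repr_tmul] using congrFun hxy i
  · simp [LinearEquiv.conj_apply]

/-- if every eigenvalue of the complexification of an endomorphism `D`
of a finite-dimensional real normed space `V` has positive real part, then
`‖exp(tD)v‖ → ∞` as `t → ∞`, for every `v ∈ V` with `v ≠ 0`. -/
theorem stmt_15 {V : Type*} [NormedAddCommGroup V] [NormedSpace ℝ V]
    [FiniteDimensional ℝ V] (D : V →L[ℝ] V)
    (heig : ∀ z : ℂ, Module.End.HasEigenvalue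
      (LinearMap.baseChange ℂ (D : V →ₗ[ℝ] V)) z → 0 < z.re)
    (v : V) (hv : v ≠ 0) :
    Tendsto (fun t : ℝ => ‖NormedSpace.exp (t • D) v‖) atTop atTop := by
  obtain ⟨n, T, ρ, hρ, hTρ, hspec⟩ := exists_complex_intertwiner (D : V →ₗ[ℝ] V)
  let ρL := LinearMap.toContinuousLinearMap ρ
  have hexp (t : ℝ) : exp (t • T) (ρ v) = ρL (exp (t • D) v) :=
    exp_apply_eq_of_intertwine ρL (t • D) (t • T) (fun x => by simp [ρL, hTρ]) v
  have hρv : ρ v ≠ 0 := (map_ne_zero_iff ρ hρ).2 hv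
  have hρL : 0 < ‖ρL‖ := norm_pos_iff.2 (ne_of_apply_ne (· v) (by simpa [ρL] using hρv))
  have hgrowth := tendsto_norm_exp_smul_apply_atTop T (fun μ hμ => heig μ (hspec μ hμ)) hρv
  refine tendsto_atTop_mono (fun t => ?_) (hgrowth.atTop_div_const hρL)
  rw [div_le_iff₀ hρL, hexp, mul_comm]
  exact ρL.le_opNorm _
end
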